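/- arXiv:1702.02639 — 8 statements merged into one kernel-verified Lean document; each statement's English description precedes it below -/
import Mathlib

section
/- Let H be a graph and let G = (V,E) be a graph admitting an H-covering. If f is an H-magic vertex labeling of G with H-magic sum c and g is an H-magic edge labeling of G with H-magic sum c', then the map F defined by F(v) = f(v) for v ∈ V and F(e) = g(e) + |V| for e ∈ E is an H-supermagic labeling of G with H-supermagic sum c + c' + |E(H)|·|V|. -/
/-! Shifting the edge labels by `|V|` moves their range from `{1, …, |E|}` onto
`{|V|+1, …, |V|+|E|}`, and every copy of `H` in `G` has exactly `|E(H)|` edges, so each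
`H`-sum of edge labels grows by exactly `|E(H)|·|V|`. -/

/-- The grid graph `Grid(n 0, …, n (d-1))`: vertices are tuples whose `i`-th coordinate
ranges over a set of size `n i` (we use `Fin (n i) = {0, …, n i - 1}`, corresponding to the
coordinate `[n i] = {1, …, n i}` via `v ↦ v + 1`); two vertices are adjacent iff they differ
by exactly one in one coordinate and agree in all others. -/
def gridGraph {d : ℕ} (n : Fin d → ℕ) : SimpleGraph (∀ i, Fin (n i)) where
  Adj x y := ∃ i, ((x i : ℕ) + 1 = (y i : ℕ) ∨ (y i : ℕ) + 1 = (x i : ℕ)) ∧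
    ∀ j, j ≠ i → x j = y j
  symm := by
    constructor
    rintro x y ⟨i, h, hj⟩
    exact ⟨i, h.symm, fun j hji => (hj j hji).symm⟩
  loopless := by
    constructor
    rintro x ⟨i, h, -⟩
    rcases h with h | h <;> omega

/-- `f` is an `H`-magic vertex labeling of `G` with `H`-magic sum `c`:
a bijection from the vertices of `G` onto `{1, …, |V|}` such that the vertex labels of every
subgraph of `G` isomorphic to `H` sum to `c`. -/
def IsMagicVertexLabeling {V : Type*} [Fintype V] {W : Type*}
    (G : SimpleGraph V) (H : SimpleGraph W) (f : V → ℤ) (c : ℤ) : Prop :=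
  Set.BijOn f Set.univ (Set.Icc 1 (Fintype.card V : ℤ)) ∧
  ∀ G' : G.Subgraph, Nonempty (G'.coe ≃g H) → ∑ᶠ v ∈ G'.verts, f v = c

/-- `g` is an `H`-magic edge labeling of `G` with `H`-magic sum `c`:
a bijection from the edges of `G` onto `{1, …, |E|}` such that the edge labels of every
subgraph of `G` isomorphic to `H` sum to `c`. -/
def IsMagicEdgeLabeling {V : Type*} [Fintype V] {W : Type*}
    (G : SimpleGraph V) (H : SimpleGraph W) (g : Sym2 V → ℤ) (c : ℤ) : Prop :=
  Set.BijOn g G.edgeSet (Set.Icc 1 (G.edgeSet.ncard : ℤ)) ∧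
  ∀ G' : G.Subgraph, Nonempty (G'.coe ≃g H) → ∑ᶠ e ∈ G'.edgeSet, g e = c

/-- `G` admits an `H`-covering: every edge of `G` belongs to at least one subgraph of `G`
isomorphic to `H`. -/
def AdmitsCovering {V W : Type*} (G : SimpleGraph V) (H : SimpleGraph W) : Prop :=
  ∀ e ∈ G.edgeSet, ∃ G' : G.Subgraph, e ∈ G'.edgeSet ∧ Nonempty (G'.coe ≃g H)

/-- `(Fv, Fe)` is an `H`-supermagic labeling of `G` with `H`-supermagic sum `c`:
the vertex part is a bijection onto `{1, …, |V|}`, the edge part is a bijection from the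
edges onto `{|V|+1, …, |V|+|E|}` (together a bijection `V ∪ E → {1, …, |V|+|E|}` mapping `V`
onto `{1, …, |V|}`), and the labels of every subgraph isomorphic to `H` sum to `c`. -/
def IsSupermagicLabeling {V : Type*} [Fintype V] {W : Type*}
    (G : SimpleGraph V) (H : SimpleGraph W) (Fv : V → ℤ) (Fe : Sym2 V → ℤ) (c : ℤ) : Prop :=
  Set.BijOn Fv Set.univ (Set.Icc 1 (Fintype.card V : ℤ)) ∧
  Set.BijOn Fe G.edgeSet
    (Set.Icc ((Fintype.card V : ℤ) + 1) ((Fintype.card V : ℤ) + (G.edgeSet.ncard : ℤ))) ∧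
  ∀ G' : G.Subgraph, Nonempty (G'.coe ≃g H) →
    (∑ᶠ v ∈ G'.verts, Fv v) + (∑ᶠ e ∈ G'.edgeSet, Fe e) = c

/-- `G` is `H`-supermagic with `H`-supermagic sum `c`. -/
def IsSupermagic {V : Type*} [Fintype V] {W : Type*}
    (G : SimpleGraph V) (H : SimpleGraph W) (c : ℤ) : Prop :=
  AdmitsCovering G H ∧ ∃ Fv Fe, IsSupermagicLabeling G H Fv Fe c

lemma finsum_mem_add_const {α M : Type*} [AddCommMonoid M] {s : Set α} (hs : s.Finite)
    (f : α → M) (k : M) : ∑ᶠ a ∈ s, (f a + k) = ∑ᶠ a ∈ s, f a + s.ncard • k := by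
  rw [finsum_mem_add_distrib hs, finsum_mem_eq_finite_toFinset_sum (fun _ ↦ k) hs,
    Finset.sum_const, Set.ncard_eq_toFinset_card s hs]

namespace SimpleGraph

variable {V W : Type*} {G : SimpleGraph V} {H : SimpleGraph W}

lemma Iso.ncard_edgeSet_eq (φ : G ≃g H) : G.edgeSet.ncard = H.edgeSet.ncard := by
  rw [← Nat.card_coe_set_eq, ← Nat.card_coe_set_eq]
  exact Nat.card_congr φ.mapEdgeSet

lemma Subgraph.ncard_edgeSet_coe (G' : G.Subgraph) : G'.coe.edgeSet.ncard = G'.edgeSet.ncard := by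
  rw [← G'.image_coe_edgeSet_coe,
    Set.ncard_image_of_injective _ (Sym2.map.injective Subtype.val_injective)]

lemma Subgraph.ncard_edgeSet_eq_of_iso {G' : G.Subgraph} (φ : G'.coe ≃g H) :
    G'.edgeSet.ncard = H.edgeSet.ncard := by
  rw [← G'.ncard_edgeSet_coe, φ.ncard_edgeSet_eq]

end SimpleGraph

theorem combine_magic_labelings_general {V W : Type*} [Fintype V]
    (G : SimpleGraph V) (H : SimpleGraph W)
    (f : V → ℤ) (c : ℤ) (hf : IsMagicVertexLabeling G H f c)
    (g : Sym2 V → ℤ) (c' : ℤ) (hg : IsMagicEdgeLabeling G H g c') :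
    IsSupermagicLabeling G H f (fun e => g e + (Fintype.card V : ℤ))
      (c + c' + (H.edgeSet.ncard : ℤ) * (Fintype.card V : ℤ)) := by
  refine ⟨hf.1, ?_, fun G' hG' ↦ ?_⟩
  · have hshift := (Set.Icc_add_bij 1 (G.edgeSet.ncard : ℤ) (Fintype.card V : ℤ)).comp hg.1
    rwa [add_comm 1, add_comm (G.edgeSet.ncard : ℤ)] at hshift
  · obtain ⟨φ⟩ := hG'
    rw [finsum_mem_add_const (Set.toFinite _), hf.2 G' ⟨φ⟩, hg.2 G' ⟨φ⟩,
      G'.ncard_edgeSet_eq_of_iso φ, nsmul_eq_mul]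
    ring

/-- If `G` admits an `H`-covering, `f` is an `H`-magic vertex labeling of `G`
with sum `c` and `g` is an `H`-magic edge labeling of `G` with sum `c'`, then `F` defined by
`F(v) = f(v)` on vertices and `F(e) = g(e) + |V|` on edges is an `H`-supermagic labeling of
`G` with `H`-supermagic sum `c + c' + |E(H)|·|V|`. -/
theorem combine_magic_labelings {V W : Type*} [Fintype V]
    (G : SimpleGraph V) (H : SimpleGraph W) (hcov : AdmitsCovering G H)
    (f : V → ℤ) (c : ℤ) (hf : IsMagicVertexLabeling G H f c)
    (g : Sym2 V → ℤ) (c' : ℤ) (hg : IsMagicEdgeLabeling G H g c') :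
    IsSupermagicLabeling G H f (fun e => g e + (Fintype.card V : ℤ))
      (c + c' + (H.edgeSet.ncard : ℤ) * (Fintype.card V : ℤ)) :=
  combine_magic_labelings_general G H f c hf g c' hg
end

section
/- For integers n_1, n_2 ≥ 2, the function f defined by f(i,j) = (i-1)n_2 + j if i and j are both odd; (i-1)n_2 + (n_2+1-j) if i and j are both even; (n_1-i)n_2 + j + ε if i is odd and j is even; and (n_1-i)n_2 + (n_2+1-j+ε) if i is even and j is odd, where ε = 1 if n_1 is even and n_2 is odd and ε = 0 otherwise, is a Q_2-magic vertex labeling of Grid(n_1,n_2) with Q_2-magic sum 2(n_1 n_2 + 1) if n_1 is odd or n_2 is even, and 2(n_1 n_2 + 2) if n_1 is even and n_2 is odd. -/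
/-!
Write the label of `(i, j)` as `b * n₂ + r` with block `b ∈ [0, n₁ - 1]` and offset `r`: row `i`
fills block `i - 1` in the columns of its own parity and block `n₁ - i` in the others, with
offsets `j` or `n₂ + 1 - j`. When `ε = 1` the offsets in block `n₁ - i` are shifted up by one,
the overflow `n₂ + 1` landing on the first slot of the following block. So every label in
`[1, n₁ n₂]` is hit exactly once. On the four corners of a unit square the blocks add up to
`2 (n₁ - 1)` and the offsets to `2 (n₂ + 1 + ε)`, so every unit square has label sum
`2 (n₁ n₂ + 1 + ε)`. Finally, a copy of `Q₂` in the grid is a 4-cycle, and a 4-cycle in the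
lattice `ℕ × ℕ` bounds a unit square.
-/

open SimpleGraph

lemma mul_add_eq_mul_add_cases {n a b r s : ℤ} (hn : 0 < n) (h : a * n + r = b * n + s)
    (hr : 1 ≤ r ∧ r ≤ n + 1) (hs : 1 ≤ s ∧ s ≤ n + 1) :
    a = b ∧ r = s ∨ a + 1 = b ∧ r = n + 1 ∧ s = 1 ∨ b + 1 = a ∧ s = n + 1 ∧ r = 1 := by
  have hd : (a - b) * n = s - r := by linear_combination h
  have hlt : a - b < 2 := by
    by_contra! h2
    nlinarith [mul_le_mul_of_nonneg_right h2 hn.le]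
  have hgt : -2 < a - b := by
    by_contra! h2
    nlinarith [mul_le_mul_of_nonneg_right h2 hn.le]
  rcases (by omega : a - b = -1 ∨ a - b = 0 ∨ a - b = 1) with h1 | h1 | h1 <;>
    rw [h1] at hd <;> omega

lemma finsum_mem_eq_sum_of_equiv {α ι M : Type*} [AddCommMonoid M] [Fintype ι] {s : Set α}
    (e : s ≃ ι) (f : α → M) : ∑ᶠ a ∈ s, f a = ∑ i, f (e.symm i) := by
  rw [← finsum_set_coe_eq_finsum_mem, ← finsum_comp_equiv e.symm, finsum_eq_sum_of_fintype]

lemma Finset.sum_comp_eq_of_injective {ι α M : Type*} [Fintype ι] [AddCommMonoid M]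
    {s : Finset α} {p : ι → α} (hp : Function.Injective p) (hmem : ∀ i, p i ∈ s)
    (hcard : s.card ≤ Fintype.card ι) (g : α → M) : ∑ i, g (p i) = ∑ a ∈ s, g a :=
  Finset.sum_nbij p (fun i _ => hmem i) hp.injOn
    (Finset.surjOn_of_injOn_of_card_le p (fun i _ => hmem i) hp.injOn hcard) fun _ _ => rfl

lemma Finset.card_Icc_add_one_prod (m : ℕ × ℕ) : (Finset.Icc m (m + 1)).card = 4 := by
  simp [Finset.card_Icc_prod, add_assoc]

lemma Finset.sum_Icc_add_one_prod {M : Type*} [AddCommMonoid M] (m : ℕ × ℕ) (g : ℕ × ℕ → M) :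
    ∑ q ∈ Finset.Icc m (m + 1), g q =
      g m + g (m.1 + 1, m.2) + g (m.1, m.2 + 1) + g (m.1 + 1, m.2 + 1) := by
  rw [Finset.Icc_prod_def, Finset.sum_product]
  simp [Finset.sum_Icc_succ_top]
  abel

lemma exists_forall_mem_Icc_add_one_of_injective
    (e : gridGraph (fun _ : Fin 2 => 2) →g hasse ℕ □ hasse ℕ) (he : Function.Injective e) :
    ∃ m, ∀ u, e u ∈ Finset.Icc m (m + 1) := by
  have step : ∀ u w, (gridGraph (fun _ : Fin 2 => 2)).Adj u w →
      ((e u).1 + 1 = (e w).1 ∨ (e w).1 + 1 = (e u).1) ∧ (e u).2 = (e w).2 ∨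
      ((e u).2 + 1 = (e w).2 ∨ (e w).2 + 1 = (e u).2) ∧ (e u).1 = (e w).1 := fun u w h => by
    simpa only [boxProd_adj, hasse_adj, Nat.covBy_iff_add_one_eq] using e.map_adj h
  have ne : ∀ u w, u ≠ w → (e u).1 ≠ (e w).1 ∨ (e u).2 ≠ (e w).2 := fun u w h => by
    by_contra! h'
    exact h (he (Prod.ext h'.1 h'.2))
  have hab := step ![0, 0] ![1, 0] ⟨0, by decide, by decide⟩
  have hac := step ![0, 0] ![0, 1] ⟨1, by decide, by decide⟩
  have hbd := step ![1, 0] ![1, 1] ⟨1, by decide, by decide⟩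
  have hcd := step ![0, 1] ![1, 1] ⟨0, by decide, by decide⟩
  have had := ne ![0, 0] ![1, 1] (by decide)
  have hbc := ne ![1, 0] ![0, 1] (by decide)
  -- the lower corner is the coordinatewise minimum of two opposite vertices of the 4-cycle
  refine ⟨(min (e ![0, 0]).1 (e ![1, 1]).1, min (e ![0, 0]).2 (e ![1, 1]).2), fun u => ?_⟩
  simp only [Finset.mem_Icc, Prod.le_def, Prod.fst_add, Prod.snd_add, Prod.fst_one, Prod.snd_one]
  have hu : u = ![0, 0] ∨ u = ![1, 0] ∨ u = ![0, 1] ∨ u = ![1, 1] := by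
    revert u
    decide
  rcases hu with rfl | rfl | rfl | rfl <;> omega

def gridCoords (n₁ n₂ : ℕ) : gridGraph ![n₁, n₂] →g hasse ℕ □ hasse ℕ where
  toFun v := ((v 0 : ℕ), (v 1 : ℕ))
  map_rel' := by
    rintro v w ⟨k, hk, hother⟩
    simp only [boxProd_adj, hasse_adj, Nat.covBy_iff_add_one_eq]
    fin_cases k
    · exact Or.inl ⟨hk, congrArg Fin.val (hother 1 (by decide))⟩
    · exact Or.inr ⟨hk, congrArg Fin.val (hother 0 (by decide))⟩

lemma gridCoords_injective (n₁ n₂ : ℕ) : Function.Injective (gridCoords n₁ n₂) := by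
  intro v w h
  obtain ⟨h₀, h₁⟩ := Prod.ext_iff.1 h
  funext k
  fin_cases k
  exacts [Fin.ext h₀, Fin.ext h₁]

lemma card_gridGraph_vertices (n₁ n₂ : ℕ) : Fintype.card (∀ k, Fin (![n₁, n₂] k)) = n₁ * n₂ := by
  simp [Fintype.card_pi, Fin.prod_univ_two]

lemma exists_finsum_verts_eq_unitSquare_sum {M : Type*} [AddCommMonoid M] {n₁ n₂ : ℕ}
    (G' : (gridGraph ![n₁, n₂]).Subgraph) (φ : G'.coe ≃g gridGraph (fun _ : Fin 2 => 2))
    (g : ℕ × ℕ → M) : ∃ m : ℕ × ℕ, ∑ᶠ v ∈ G'.verts, g (gridCoords n₁ n₂ v) =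
      g m + g (m.1 + 1, m.2) + g (m.1, m.2 + 1) + g (m.1 + 1, m.2 + 1) := by
  let e := (gridCoords n₁ n₂).comp (G'.hom.comp φ.symm.toHom)
  have he : Function.Injective e :=
    (gridCoords_injective n₁ n₂).comp (Subgraph.hom_injective.comp φ.symm.injective)
  obtain ⟨m, hm⟩ := exists_forall_mem_Icc_add_one_of_injective e he
  refine ⟨m, ?_⟩
  rw [finsum_mem_eq_sum_of_equiv φ.toEquiv, ← Finset.sum_Icc_add_one_prod]
  exact Finset.sum_comp_eq_of_injective he hm (by rw [Finset.card_Icc_add_one_prod]; rfl) g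

def gridEps (n₁ n₂ : ℕ) : ℤ := if Even n₁ ∧ Odd n₂ then 1 else 0

-- the paper's `f (i, j)`, in its 1-based coordinates (`gridCoords` is 0-based)
def gridLabel (n₁ n₂ i j : ℕ) : ℤ :=
  if Odd i ∧ Odd j then ((i : ℤ) - 1) * n₂ + j
  else if Even i ∧ Even j then ((i : ℤ) - 1) * n₂ + ((n₂ : ℤ) + 1 - j)
  else if Odd i then ((n₁ : ℤ) - i) * n₂ + j + gridEps n₁ n₂
  else ((n₁ : ℤ) - i) * n₂ + ((n₂ : ℤ) + 1 - j + gridEps n₁ n₂)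

def gridBlock (n₁ i j : ℕ) : ℤ := if i % 2 = j % 2 then (i : ℤ) - 1 else (n₁ : ℤ) - i

def gridOffset (n₁ n₂ i j : ℕ) : ℤ :=
  if i % 2 = 1 then (if j % 2 = 1 then (j : ℤ) else j + gridEps n₁ n₂)
  else (if j % 2 = 0 then (n₂ : ℤ) + 1 - j else (n₂ : ℤ) + 1 - j + gridEps n₁ n₂)

lemma gridEps_eq_zero_or_one (n₁ n₂ : ℕ) : gridEps n₁ n₂ = 0 ∨ gridEps n₁ n₂ = 1 := by
  unfold gridEps
  split_ifs <;> simp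

lemma gridEps_eq_one_iff {n₁ n₂ : ℕ} : gridEps n₁ n₂ = 1 ↔ n₁ % 2 = 0 ∧ n₂ % 2 = 1 := by
  unfold gridEps
  simp only [Nat.odd_iff, Nat.even_iff]
  split_ifs <;> simp_all

lemma ite_magicSum_eq (n₁ n₂ : ℕ) :
    (if Odd n₁ ∨ Even n₂ then 2 * ((n₁ : ℤ) * n₂ + 1) else 2 * ((n₁ : ℤ) * n₂ + 2)) =
      2 * ((n₁ : ℤ) * n₂ + 1) + 2 * gridEps n₁ n₂ := by
  unfold gridEps
  simp only [Nat.odd_iff, Nat.even_iff]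
  split_ifs <;> omega

lemma gridLabel_eq_gridBlock_mul_add_gridOffset (n₁ n₂ i j : ℕ) :
    gridLabel n₁ n₂ i j = gridBlock n₁ i j * n₂ + gridOffset n₁ n₂ i j := by
  unfold gridLabel gridBlock gridOffset
  simp only [Nat.odd_iff, Nat.even_iff]
  split_ifs <;> omega

lemma gridBlock_square_sum (n₁ i j : ℕ) :
    gridBlock n₁ i j + gridBlock n₁ (i + 1) j + gridBlock n₁ i (j + 1) +
      gridBlock n₁ (i + 1) (j + 1) = 2 * ((n₁ : ℤ) - 1) := by
  unfold gridBlock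
  split_ifs <;> omega

lemma gridOffset_square_sum (n₁ n₂ i j : ℕ) :
    gridOffset n₁ n₂ i j + gridOffset n₁ n₂ (i + 1) j + gridOffset n₁ n₂ i (j + 1) +
      gridOffset n₁ n₂ (i + 1) (j + 1) = 2 * ((n₂ : ℤ) + 1) + 2 * gridEps n₁ n₂ := by
  unfold gridOffset
  split_ifs <;> omega

lemma gridLabel_square_sum (n₁ n₂ i j : ℕ) :
    gridLabel n₁ n₂ i j + gridLabel n₁ n₂ (i + 1) j + gridLabel n₁ n₂ i (j + 1) +
      gridLabel n₁ n₂ (i + 1) (j + 1) = 2 * ((n₁ : ℤ) * n₂ + 1) + 2 * gridEps n₁ n₂ := by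
  simp only [gridLabel_eq_gridBlock_mul_add_gridOffset]
  linear_combination (n₂ : ℤ) * gridBlock_square_sum n₁ i j + gridOffset_square_sum n₁ n₂ i j

section Bounds

variable {n₁ n₂ i j : ℕ}

lemma gridBlock_bounds (hi : 1 ≤ i ∧ i ≤ n₁) :
    0 ≤ gridBlock n₁ i j ∧ gridBlock n₁ i j + 1 ≤ n₁ := by
  unfold gridBlock
  split_ifs <;> omega

lemma gridOffset_bounds (hi : 1 ≤ i ∧ i ≤ n₁) (hj : 1 ≤ j ∧ j ≤ n₂) :
    1 ≤ gridOffset n₁ n₂ i j ∧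
      (gridOffset n₁ n₂ i j ≤ n₂ ∨ gridOffset n₁ n₂ i j = n₂ + 1 ∧ gridBlock n₁ i j + 2 ≤ n₁) := by
  have := gridEps_eq_zero_or_one n₁ n₂
  have := @gridEps_eq_one_iff n₁ n₂
  unfold gridOffset gridBlock
  split_ifs <;> omega

lemma gridLabel_mem_Icc (hi : 1 ≤ i ∧ i ≤ n₁) (hj : 1 ≤ j ∧ j ≤ n₂) :
    gridLabel n₁ n₂ i j ∈ Set.Icc 1 ((n₁ : ℤ) * n₂) := by
  obtain ⟨hb₀, hb₁⟩ := gridBlock_bounds (j := j) hi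
  obtain ⟨hr₀, hr | ⟨hr, hb₂⟩⟩ := gridOffset_bounds hi hj <;>
    rw [gridLabel_eq_gridBlock_mul_add_gridOffset] <;> constructor <;> nlinarith

lemma eq_and_eq_of_gridLabel_eq {i' j' : ℕ} (hi : 1 ≤ i ∧ i ≤ n₁) (hj : 1 ≤ j ∧ j ≤ n₂)
    (hi' : 1 ≤ i' ∧ i' ≤ n₁) (hj' : 1 ≤ j' ∧ j' ≤ n₂)
    (h : gridLabel n₁ n₂ i j = gridLabel n₁ n₂ i' j') : i = i' ∧ j = j' := by
  rw [gridLabel_eq_gridBlock_mul_add_gridOffset, gridLabel_eq_gridBlock_mul_add_gridOffset] at h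
  have hr := gridOffset_bounds hi hj
  have hs := gridOffset_bounds hi' hj'
  have hcases := mul_add_eq_mul_add_cases (by omega) h (by omega) (by omega)
  have := gridEps_eq_zero_or_one n₁ n₂
  have := @gridEps_eq_one_iff n₁ n₂
  clear h
  rcases Nat.mod_two_eq_zero_or_one i with hi₂ | hi₂ <;>
    rcases Nat.mod_two_eq_zero_or_one j with hj₂ | hj₂ <;>
    rcases Nat.mod_two_eq_zero_or_one i' with hi₂' | hi₂' <;>
    rcases Nat.mod_two_eq_zero_or_one j' with hj₂' | hj₂' <;>
    simp only [gridOffset, gridBlock, hi₂, hj₂, hi₂', hj₂', zero_ne_one, one_ne_zero, if_true,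
      if_false] at hr hs hcases <;>
    omega

end Bounds

lemma gridLabel_bijOn (n₁ n₂ : ℕ) :
    Set.BijOn (fun v : ∀ k, Fin (![n₁, n₂] k) => gridLabel n₁ n₂ ((v 0 : ℕ) + 1) ((v 1 : ℕ) + 1))
      Set.univ (Set.Icc 1 (Fintype.card (∀ k, Fin (![n₁, n₂] k)) : ℤ)) := by
  set f := fun v : ∀ k, Fin (![n₁, n₂] k) => gridLabel n₁ n₂ ((v 0 : ℕ) + 1) ((v 1 : ℕ) + 1)
  have hrange (v : ∀ k, Fin (![n₁, n₂] k)) :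
      (1 ≤ (v 0 : ℕ) + 1 ∧ (v 0 : ℕ) + 1 ≤ n₁) ∧ (1 ≤ (v 1 : ℕ) + 1 ∧ (v 1 : ℕ) + 1 ≤ n₂) :=
    ⟨⟨Nat.le_add_left 1 _, (v 0).isLt⟩, ⟨Nat.le_add_left 1 _, (v 1).isLt⟩⟩
  have hmaps : Set.MapsTo f Set.univ (Set.Icc 1 (Fintype.card (∀ k, Fin (![n₁, n₂] k)) : ℤ)) :=
    fun v _ => by
      rw [card_gridGraph_vertices, Nat.cast_mul]
      exact gridLabel_mem_Icc (hrange v).1 (hrange v).2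
  have hinj : Set.InjOn f Set.univ := fun v _ w _ h => by
    obtain ⟨h₀, h₁⟩ :=
      eq_and_eq_of_gridLabel_eq (hrange v).1 (hrange v).2 (hrange w).1 (hrange w).2 h
    exact gridCoords_injective n₁ n₂
      (Prod.ext (Nat.add_right_cancel h₀) (Nat.add_right_cancel h₁))
  have hsurj := Finset.surjOn_of_injOn_of_card_le (s := Finset.univ)
    (t := Finset.Icc 1 (Fintype.card (∀ k, Fin (![n₁, n₂] k)) : ℤ)) f
    (by simpa using hmaps) (by simpa using hinj) (by simp)
  exact ⟨hmaps, hinj, by simpa using hsurj⟩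

theorem base_case_vertex_labeling_is_magic_general (n₁ n₂ : ℕ) :
    IsMagicVertexLabeling (gridGraph ![n₁, n₂]) (gridGraph (fun _ : Fin 2 => (2 : ℕ)))
      (fun v =>
        let i : ℕ := (v 0 : ℕ) + 1
        let j : ℕ := (v 1 : ℕ) + 1
        let ε : ℤ := if Even n₁ ∧ Odd n₂ then 1 else 0
        if Odd i ∧ Odd j then ((i : ℤ) - 1) * n₂ + j
        else if Even i ∧ Even j then ((i : ℤ) - 1) * n₂ + ((n₂ : ℤ) + 1 - j)
        else if Odd i then ((n₁ : ℤ) - i) * n₂ + j + ε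
        else ((n₁ : ℤ) - i) * n₂ + ((n₂ : ℤ) + 1 - j + ε))
      (if Odd n₁ ∨ Even n₂ then 2 * ((n₁ : ℤ) * n₂ + 1) else 2 * ((n₁ : ℤ) * n₂ + 2)) := by
  rw [ite_magicSum_eq]
  refine ⟨gridLabel_bijOn n₁ n₂, ?_⟩
  rintro G' ⟨φ⟩
  obtain ⟨m, hm⟩ := exists_finsum_verts_eq_unitSquare_sum G' φ
    fun q => gridLabel n₁ n₂ (q.1 + 1) (q.2 + 1)
  exact hm.trans (gridLabel_square_sum n₁ n₂ (m.1 + 1) (m.2 + 1))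

/-- the explicit vertex labeling `f` (where a vertex `v` of `Grid(n₁,n₂)` has
coordinates `i = v 0 + 1 ∈ [n₁]`, `j = v 1 + 1 ∈ [n₂]`) is a `Q₂`-magic vertex labeling of
`Grid(n₁,n₂)` with `Q₂`-magic sum `2(n₁n₂+1)` if `n₁` is odd or `n₂` is even, and
`2(n₁n₂+2)` if `n₁` is even and `n₂` is odd. -/
theorem base_case_vertex_labeling_is_magic (n₁ n₂ : ℕ) (h₁ : 2 ≤ n₁) (h₂ : 2 ≤ n₂) :
    IsMagicVertexLabeling (gridGraph ![n₁, n₂]) (gridGraph (fun _ : Fin 2 => (2 : ℕ)))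
      (fun v =>
        let i : ℕ := (v 0 : ℕ) + 1
        let j : ℕ := (v 1 : ℕ) + 1
        let ε : ℤ := if Even n₁ ∧ Odd n₂ then 1 else 0
        if Odd i ∧ Odd j then ((i : ℤ) - 1) * n₂ + j
        else if Even i ∧ Even j then ((i : ℤ) - 1) * n₂ + ((n₂ : ℤ) + 1 - j)
        else if Odd i then ((n₁ : ℤ) - i) * n₂ + j + ε
        else ((n₁ : ℤ) - i) * n₂ + ((n₂ : ℤ) + 1 - j + ε))
      (if Odd n₁ ∨ Even n₂ then 2 * ((n₁ : ℤ) * n₂ + 1) else 2 * ((n₁ : ℤ) * n₂ + 2)) :=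
  base_case_vertex_labeling_is_magic_general n₁ n₂
end

section
/- For integers n_1, n_2 ≥ 2, let f be defined on [n_1]×[n_2] by f(i,j) = (i-1)n_2 + j if i and j are both odd; (i-1)n_2 + (n_2+1-j) if i and j are both even; (n_1-i)n_2 + j + ε if i is odd and j is even; and (n_1-i)n_2 + (n_2+1-j+ε) if i is even and j is odd, where ε = 1 if n_1 is even and n_2 is odd and ε = 0 otherwise. Then for every (i,j) ∈ [n_1-1]×[n_2-1], f(i,j) + f(i,j+1) + f(i+1,j) + f(i+1,j+1) = 2(n_1 n_2 + 1 + ε). -/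
/-!
In every unit square of the grid the four corners realise the four parity classes of `(i, j)`
exactly once, so each branch of the labeling formula is used once. The two "reflected" branches
contribute `ε` each, and the remaining terms add up to `2 (n₁ n₂ + 1)` whatever the parities
of the lower-left corner are.
-/

section BaseLabel

variable (n₁ n₂ ε : ℤ) {i j : ℤ}

def baseLabel (i j : ℤ) : ℤ :=
  if Odd i ∧ Odd j then (i - 1) * n₂ + j
  else if Even i ∧ Even j then (i - 1) * n₂ + (n₂ + 1 - j)
  else if Odd i then (n₁ - i) * n₂ + j + ε
  else (n₁ - i) * n₂ + (n₂ + 1 - j + ε)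

theorem baseLabel_odd_odd (hi : Odd i) (hj : Odd j) :
    baseLabel n₁ n₂ ε i j = (i - 1) * n₂ + j :=
  if_pos ⟨hi, hj⟩

theorem baseLabel_even_even (hi : Even i) (hj : Even j) :
    baseLabel n₁ n₂ ε i j = (i - 1) * n₂ + (n₂ + 1 - j) := by
  simp [baseLabel, hi, hj, Int.not_odd_iff_even.mpr hi]

theorem baseLabel_odd_even (hi : Odd i) (hj : Even j) :
    baseLabel n₁ n₂ ε i j = (n₁ - i) * n₂ + j + ε := by
  simp [baseLabel, hi, hj, Int.not_even_iff_odd.mpr hi]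

theorem baseLabel_even_odd (hi : Even i) (hj : Odd j) :
    baseLabel n₁ n₂ ε i j = (n₁ - i) * n₂ + (n₂ + 1 - j + ε) := by
  simp [baseLabel, hj, Int.not_even_iff_odd.mpr hj, Int.not_odd_iff_even.mpr hi]

theorem baseLabel_square_sum (i j : ℤ) :
    baseLabel n₁ n₂ ε i j + baseLabel n₁ n₂ ε i (j + 1) + baseLabel n₁ n₂ ε (i + 1) j +
      baseLabel n₁ n₂ ε (i + 1) (j + 1) = 2 * (n₁ * n₂ + 1 + ε) := by
  rcases Int.even_or_odd i with hi | hi <;> rcases Int.even_or_odd j with hj | hj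
  · rw [baseLabel_even_even _ _ _ hi hj, baseLabel_even_odd _ _ _ hi hj.add_one,
      baseLabel_odd_even _ _ _ hi.add_one hj, baseLabel_odd_odd _ _ _ hi.add_one hj.add_one]
    ring
  · rw [baseLabel_even_odd _ _ _ hi hj, baseLabel_even_even _ _ _ hi hj.add_one,
      baseLabel_odd_odd _ _ _ hi.add_one hj, baseLabel_odd_even _ _ _ hi.add_one hj.add_one]
    ring
  · rw [baseLabel_odd_even _ _ _ hi hj, baseLabel_odd_odd _ _ _ hi hj.add_one,
      baseLabel_even_even _ _ _ hi.add_one hj, baseLabel_even_odd _ _ _ hi.add_one hj.add_one]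
    ring
  · rw [baseLabel_odd_odd _ _ _ hi hj, baseLabel_odd_even _ _ _ hi hj.add_one,
      baseLabel_even_odd _ _ _ hi.add_one hj, baseLabel_even_even _ _ _ hi.add_one hj.add_one]
    ring

end BaseLabel

theorem base_case_vertex_square_sum_general (n₁ n₂ : ℤ) (ε : ℤ)
    (f : ℤ → ℤ → ℤ)
    (hf : ∀ i j : ℤ, 1 ≤ i → i ≤ n₁ → 1 ≤ j → j ≤ n₂ →
      f i j =
        if Odd i ∧ Odd j then (i - 1) * n₂ + j
        else if Even i ∧ Even j then (i - 1) * n₂ + (n₂ + 1 - j)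
        else if Odd i then (n₁ - i) * n₂ + j + ε
        else (n₁ - i) * n₂ + (n₂ + 1 - j + ε)) :
    ∀ i j : ℤ, 1 ≤ i → i ≤ n₁ - 1 → 1 ≤ j → j ≤ n₂ - 1 →
      f i j + f i (j + 1) + f (i + 1) j + f (i + 1) (j + 1) = 2 * (n₁ * n₂ + 1 + ε) := by
  intro i j hi₁ hi₂ hj₁ hj₂
  rw [hf i j (by omega) (by omega) (by omega) (by omega),
    hf i (j + 1) (by omega) (by omega) (by omega) (by omega),
    hf (i + 1) j (by omega) (by omega) (by omega) (by omega),
    hf (i + 1) (j + 1) (by omega) (by omega) (by omega) (by omega)]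
  exact baseLabel_square_sum n₁ n₂ ε i j

/-- for the explicitly defined `f` on `[n₁] × [n₂]`, every unit square
`(i,j), (i,j+1), (i+1,j), (i+1,j+1)` with `(i,j) ∈ [n₁-1] × [n₂-1]` has label sum
`2(n₁n₂ + 1 + ε)`. -/
theorem base_case_vertex_square_sum (n₁ n₂ : ℤ) (h₁ : 2 ≤ n₁) (h₂ : 2 ≤ n₂) (ε : ℤ)
    (hε : ε = if Even n₁ ∧ Odd n₂ then 1 else 0) (f : ℤ → ℤ → ℤ)
    (hf : ∀ i j : ℤ, 1 ≤ i → i ≤ n₁ → 1 ≤ j → j ≤ n₂ →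
      f i j =
        if Odd i ∧ Odd j then (i - 1) * n₂ + j
        else if Even i ∧ Even j then (i - 1) * n₂ + (n₂ + 1 - j)
        else if Odd i then (n₁ - i) * n₂ + j + ε
        else (n₁ - i) * n₂ + (n₂ + 1 - j + ε)) :
    ∀ i j : ℤ, 1 ≤ i → i ≤ n₁ - 1 → 1 ≤ j → j ≤ n₂ - 1 →
      f i j + f i (j + 1) + f (i + 1) j + f (i + 1) (j + 1) = 2 * (n₁ * n₂ + 1 + ε) :=
  base_case_vertex_square_sum_general n₁ n₂ ε f hf
end

section
/- For integers n_1, n_2 ≥ 2, the function f defined on [n_1]×[n_2] by f(i,j) = (i-1)n_2 + j if i and j are both odd; (i-1)n_2 + (n_2+1-j) if i and j are both even; (n_1-i)n_2 + j + ε if i is odd and j is even; and (n_1-i)n_2 + (n_2+1-j+ε) if i is even and j is odd, where ε = 1 if n_1 is even and n_2 is odd and ε = 0 otherwise, is a bijection from [n_1]×[n_2] onto {1,...,n_1 n_2}. -/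
def epsZ (n₁ n₂ : ℤ) : ℤ := if n₁ % 2 = 0 ∧ n₂ % 2 = 1 then 1 else 0

def encZ (n₁ n₂ a b : ℤ) : ℤ × ℤ :=
  if a % 2 = 0 then
    if b % 2 = 0 then (a, b) else (n₁ - 1 - a, b + epsZ n₁ n₂)
  else
    if b % 2 = 1 then (a, n₂ - 1 - b)
    else if epsZ n₁ n₂ = 1 ∧ b = 0 then (n₁ - a, 0)
    else (n₁ - 1 - a, n₂ - 1 - b + epsZ n₁ n₂)

def decZ (n₁ n₂ q r : ℤ) : ℤ × ℤ :=
  if q % 2 = 0 ∧ r % 2 = 0 then (q, r)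
  else if q % 2 = 1 ∧ r % 2 = n₂ % 2 then (q, n₂ - 1 - r)
  else if epsZ n₁ n₂ = 1 ∧ r = 0 then (n₁ - q, 0)
  else if q % 2 ≠ n₁ % 2 then (n₁ - 1 - q, r - epsZ n₁ n₂)
  else (n₁ - 1 - q, n₂ - 1 + epsZ n₁ n₂ - r)

theorem encZ_spec (n₁ n₂ a b : ℤ) (h₁ : 2 ≤ n₁) (h₂ : 2 ≤ n₂)
    (ha0 : 0 ≤ a) (ha : a < n₁) (hb0 : 0 ≤ b) (hb : b < n₂) :
    0 ≤ (encZ n₁ n₂ a b).1 ∧ (encZ n₁ n₂ a b).1 < n₁ ∧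
    0 ≤ (encZ n₁ n₂ a b).2 ∧ (encZ n₁ n₂ a b).2 < n₂ ∧
    decZ n₁ n₂ (encZ n₁ n₂ a b).1 (encZ n₁ n₂ a b).2 = (a, b) := by
  simp only [encZ, epsZ]
  split_ifs <;>
    (dsimp only; simp only [decZ, epsZ]; split_ifs <;> first
        | omega
        | (simp_all only [Prod.mk.injEq, and_true, true_and, not_true, eq_self_iff_true,
            not_false_eq_true] <;> omega))

theorem decZ_spec (n₁ n₂ q r : ℤ) (h₁ : 2 ≤ n₁) (h₂ : 2 ≤ n₂)
    (hq0 : 0 ≤ q) (hq : q < n₁) (hr0 : 0 ≤ r) (hr : r < n₂) :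
    0 ≤ (decZ n₁ n₂ q r).1 ∧ (decZ n₁ n₂ q r).1 < n₁ ∧
    0 ≤ (decZ n₁ n₂ q r).2 ∧ (decZ n₁ n₂ q r).2 < n₂ ∧
    encZ n₁ n₂ (decZ n₁ n₂ q r).1 (decZ n₁ n₂ q r).2 = (q, r) := by
  simp only [decZ, epsZ]
  split_ifs <;>
    (dsimp only; simp only [encZ, epsZ]; split_ifs <;> first
        | omega
        | (simp_all only [Prod.mk.injEq, and_true, true_and, not_true, eq_self_iff_true,
            not_false_eq_true] <;> omega))

def Fab (n₁ n₂ i j : ℕ) : ℤ :=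
  let ε : ℤ := if Even n₁ ∧ Odd n₂ then 1 else 0
  if Odd i ∧ Odd j then ((i : ℤ) - 1) * n₂ + j
  else if Even i ∧ Even j then ((i : ℤ) - 1) * n₂ + ((n₂ : ℤ) + 1 - j)
  else if Odd i then ((n₁ : ℤ) - i) * n₂ + j + ε
  else ((n₁ : ℤ) - i) * n₂ + ((n₂ : ℤ) + 1 - j + ε)

theorem Fval (n₁ n₂ a b : ℕ) (h₁ : 2 ≤ n₁) (h₂ : 2 ≤ n₂) (ha : a < n₁) (hb : b < n₂) :
    Fab n₁ n₂ (a + 1) (b + 1)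
      = 1 + (encZ (n₁ : ℤ) (n₂ : ℤ) (a : ℤ) (b : ℤ)).1 * n₂
          + (encZ (n₁ : ℤ) (n₂ : ℤ) (a : ℤ) (b : ℤ)).2 := by
  simp only [Fab, encZ, epsZ, Nat.odd_iff, Nat.even_iff]
  split_ifs <;> dsimp only <;> first | omega | (push_cast; ring1) | (push_cast; simp_all; ring1)

theorem divmod_unique (n q1 r1 q2 r2 : ℤ) (hn : 0 < n)
    (h1 : 0 ≤ r1) (h1' : r1 < n) (h2 : 0 ≤ r2) (h2' : r2 < n)
    (h : 1 + q1 * n + r1 = 1 + q2 * n + r2) : q1 = q2 ∧ r1 = r2 := by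
  have h : q1 * n + r1 = q2 * n + r2 := by linarith
  have key : ∀ q r : ℤ, 0 ≤ r → r < n → (q * n + r) / n = q := by
    intro q r hr hr'
    rw [add_comm, Int.add_mul_ediv_right _ _ (ne_of_gt hn),
      Int.ediv_eq_zero_of_lt hr hr', zero_add]
  have hq : q1 = q2 := by
    rw [← key q1 r1 h1 h1', h, key q2 r2 h2 h2']
  refine ⟨hq, by rw [hq] at h; linarith⟩

/-- the explicit vertex labeling `f` (where a vertex `v` of the grid
`[n₁] × [n₂]` has coordinates `i = v 0 + 1 ∈ [n₁]`, `j = v 1 + 1 ∈ [n₂]`) is a bijection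
from `[n₁] × [n₂]` onto `{1, …, n₁n₂}`. -/
theorem base_case_vertex_labeling_bijective (n₁ n₂ : ℕ) (h₁ : 2 ≤ n₁) (h₂ : 2 ≤ n₂) :
    Set.BijOn
      (fun v : ∀ i : Fin 2, Fin (![n₁, n₂] i) =>
        let i : ℕ := (v 0 : ℕ) + 1
        let j : ℕ := (v 1 : ℕ) + 1
        let ε : ℤ := if Even n₁ ∧ Odd n₂ then 1 else 0
        if Odd i ∧ Odd j then ((i : ℤ) - 1) * n₂ + j
        else if Even i ∧ Even j then ((i : ℤ) - 1) * n₂ + ((n₂ : ℤ) + 1 - j)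
        else if Odd i then ((n₁ : ℤ) - i) * n₂ + j + ε
        else ((n₁ : ℤ) - i) * n₂ + ((n₂ : ℤ) + 1 - j + ε))
      Set.univ (Set.Icc 1 ((n₁ : ℤ) * n₂)) := by
  show Set.BijOn (fun v : ∀ i : Fin 2, Fin (![n₁, n₂] i) =>
    Fab n₁ n₂ ((v 0 : ℕ) + 1) ((v 1 : ℕ) + 1)) Set.univ (Set.Icc 1 ((n₁ : ℤ) * n₂))
  have hn₁ : (0 : ℤ) < n₁ := by exact_mod_cast (by omega : 0 < n₁)
  have hn₂ : (0 : ℤ) < n₂ := by exact_mod_cast (by omega : 0 < n₂)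
  have h₁' : (2 : ℤ) ≤ n₁ := by exact_mod_cast h₁
  have h₂' : (2 : ℤ) ≤ n₂ := by exact_mod_cast h₂
  have hv0 : ∀ v : ∀ i : Fin 2, Fin (![n₁, n₂] i), (v 0 : ℕ) < n₁ := fun v => (v 0).isLt
  have hv1 : ∀ v : ∀ i : Fin 2, Fin (![n₁, n₂] i), (v 1 : ℕ) < n₂ := fun v => (v 1).isLt
  have spec : ∀ v : ∀ i : Fin 2, Fin (![n₁, n₂] i),
      0 ≤ (encZ (n₁ : ℤ) (n₂ : ℤ) ((v 0 : ℕ) : ℤ) ((v 1 : ℕ) : ℤ)).1 ∧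
      (encZ (n₁ : ℤ) (n₂ : ℤ) ((v 0 : ℕ) : ℤ) ((v 1 : ℕ) : ℤ)).1 < n₁ ∧
      0 ≤ (encZ (n₁ : ℤ) (n₂ : ℤ) ((v 0 : ℕ) : ℤ) ((v 1 : ℕ) : ℤ)).2 ∧
      (encZ (n₁ : ℤ) (n₂ : ℤ) ((v 0 : ℕ) : ℤ) ((v 1 : ℕ) : ℤ)).2 < n₂ ∧
      decZ (n₁ : ℤ) (n₂ : ℤ) (encZ (n₁ : ℤ) (n₂ : ℤ) ((v 0 : ℕ) : ℤ) ((v 1 : ℕ) : ℤ)).1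
          (encZ (n₁ : ℤ) (n₂ : ℤ) ((v 0 : ℕ) : ℤ) ((v 1 : ℕ) : ℤ)).2
        = (((v 0 : ℕ) : ℤ), ((v 1 : ℕ) : ℤ)) := by
    intro v
    exact encZ_spec _ _ _ _ h₁' h₂' (by positivity) (by exact_mod_cast hv0 v)
      (by positivity) (by exact_mod_cast hv1 v)
  have fv : ∀ v : ∀ i : Fin 2, Fin (![n₁, n₂] i),
      Fab n₁ n₂ ((v 0 : ℕ) + 1) ((v 1 : ℕ) + 1)
        = 1 + (encZ (n₁ : ℤ) (n₂ : ℤ) ((v 0 : ℕ) : ℤ) ((v 1 : ℕ) : ℤ)).1 * n₂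
            + (encZ (n₁ : ℤ) (n₂ : ℤ) ((v 0 : ℕ) : ℤ) ((v 1 : ℕ) : ℤ)).2 :=
    fun v => Fval n₁ n₂ _ _ h₁ h₂ (hv0 v) (hv1 v)
  refine ⟨?_, ?_, ?_⟩
  · -- MapsTo
    intro v _
    obtain ⟨e1, e2, e3, e4, -⟩ := spec v
    rw [Set.mem_Icc]
    dsimp only
    rw [fv v]
    constructor
    · nlinarith [mul_nonneg e1 (le_of_lt hn₂)]
    · nlinarith [mul_le_mul_of_nonneg_right (by omega : (encZ (n₁ : ℤ) (n₂ : ℤ)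
        ((v 0 : ℕ) : ℤ) ((v 1 : ℕ) : ℤ)).1 ≤ (n₁ : ℤ) - 1) (le_of_lt hn₂)]
  · -- InjOn
    intro v _ w _ h
    simp only [fv v, fv w] at h
    obtain ⟨ev1, ev2, ev3, ev4, ev5⟩ := spec v
    obtain ⟨ew1, ew2, ew3, ew4, ew5⟩ := spec w
    obtain ⟨hq, hr⟩ := divmod_unique (n₂ : ℤ) _ _ _ _ hn₂ ev3 ev4 ew3 ew4 h
    rw [hq, hr] at ev5
    rw [ew5] at ev5
    have hw0 : ((v 0 : ℕ) : ℤ) = ((w 0 : ℕ) : ℤ) := (congrArg Prod.fst ev5).symm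
    have hw1 : ((v 1 : ℕ) : ℤ) = ((w 1 : ℕ) : ℤ) := (congrArg Prod.snd ev5).symm
    have hv0' : v 0 = w 0 := Fin.ext (by exact_mod_cast hw0)
    have hv1' : v 1 = w 1 := Fin.ext (by exact_mod_cast hw1)
    funext i
    fin_cases i
    · exact hv0'
    · exact hv1'
  · -- SurjOn
    intro m hm
    rw [Set.mem_Icc] at hm
    set q : ℤ := (m - 1) / n₂ with hqdef
    set r : ℤ := (m - 1) % n₂ with hrdef
    have hr0 : 0 ≤ r := Int.emod_nonneg _ (by omega)
    have hrn : r < n₂ := Int.emod_lt_of_pos _ hn₂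
    have hq0 : 0 ≤ q := Int.ediv_nonneg (by omega) (by omega)
    have hqn : q < n₁ := by
      rw [hqdef, Int.ediv_lt_iff_lt_mul hn₂]
      nlinarith [hm.2]
    obtain ⟨d1, d2, d3, d4, d5⟩ := decZ_spec (n₁ : ℤ) (n₂ : ℤ) q r h₁' h₂' hq0 hqn hr0 hrn
    set a : ℤ := (decZ (n₁ : ℤ) (n₂ : ℤ) q r).1 with hadef
    set b : ℤ := (decZ (n₁ : ℤ) (n₂ : ℤ) q r).2 with hbdef
    have ha' : a.toNat < n₁ := by omega
    have hb' : b.toNat < n₂ := by omega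
    let vv : ∀ i : Fin 2, Fin (![n₁, n₂] i) :=
      Fin.cons (⟨a.toNat, ha'⟩ : Fin n₁) (Fin.cons (⟨b.toNat, hb'⟩ : Fin n₂) (fun k => k.elim0))
    refine ⟨vv, trivial, ?_⟩
    show Fab n₁ n₂ ((vv 0 : ℕ) + 1) ((vv 1 : ℕ) + 1) = m
    have hc0 : (vv 0 : ℕ) = a.toNat := rfl
    have hc1 : (vv 1 : ℕ) = b.toNat := rfl
    rw [hc0, hc1, Fval n₁ n₂ a.toNat b.toNat h₁ h₂ ha' hb',
      show ((a.toNat : ℕ) : ℤ) = a from Int.toNat_of_nonneg d1,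
      show ((b.toNat : ℕ) : ℤ) = b from Int.toNat_of_nonneg d3,
      hadef, hbdef, d5]
    have hdm := Int.mul_ediv_add_emod (m - 1) (n₂ : ℤ)
    dsimp only
    rw [hqdef, hrdef]
    linarith [hdm]
end

section
/- For integers n_1, n_2 ≥ 2, the function g defined on the edges of Grid(n_1,n_2) by g({(i,j),(i,j+1)}) = (i-1)(2n_2-1) + j for (i,j) ∈ [n_1]×[n_2-1], and g({(i,j),(i+1,j)}) = (n_1-i)(2n_2-1) + 1 - j for (i,j) ∈ [n_1-1]×[n_2], is a Q_2-magic edge labeling of Grid(n_1,n_2) with Q_2-magic sum (2n_1-1)(2n_2-1) + 1. -/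
/-!
Put `B = 2n₂ - 1`. The horizontal edge `{(i,j),(i,j+1)}` has label `qB + r + 1` with `q = i - 1` and
`r = j - 1 ≤ n₂ - 2`, the vertical edge `{(i,j),(i+1,j)}` has label `qB + r + 1` with `q = n₁ - 1 - i`
and `r = 2n₂ - 1 - j ≥ n₂ - 1`. Since `0 ≤ r < B`, a label determines `(q, r)` and hence the edge, and
every value in `[1, 2n₁n₂ - n₁ - n₂]` arises this way.

A copy of `Q₂` in the grid is a 4-cycle, which alternates between horizontal and vertical edges and so
is a unit square. Twice the label of an edge is an affine function of the coordinates of its endpoints,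
symmetric in the two endpoints, and summed over the four sides of a square the coordinates cancel.
-/

open SimpleGraph

section TwoDimensionalGrid

variable {n : Fin 2 → ℕ}

lemma gridGraph_two_adj_iff {x y : ∀ i, Fin (n i)} :
    (gridGraph n).Adj x y ↔
      (x 0 = y 0 ∧ ((x 1 : ℕ) + 1 = y 1 ∨ (y 1 : ℕ) + 1 = x 1)) ∨
      (x 1 = y 1 ∧ ((x 0 : ℕ) + 1 = y 0 ∨ (y 0 : ℕ) + 1 = x 0)) := by
  simp only [gridGraph, Fin.exists_fin_two, Fin.forall_fin_two]
  simp only [ne_eq, not_true_eq_false, false_implies, true_and, and_true,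
    Fin.zero_eq_one_iff, Fin.one_eq_zero_iff, OfNat.ofNat_ne_one, not_false_eq_true, true_implies]
  tauto

lemma gridGraph_two_exists_oriented_edge {e : Sym2 (∀ i, Fin (n i))}
    (he : e ∈ (gridGraph n).edgeSet) :
    ∃ x y, e = s(x, y) ∧
      (x 0 = y 0 ∧ (x 1 : ℕ) + 1 = y 1 ∨ (x 0 : ℕ) + 1 = y 0 ∧ x 1 = y 1) := by
  induction e using Sym2.ind with | h x y =>
  rw [mem_edgeSet, gridGraph_two_adj_iff] at he
  rcases he with ⟨h0, h1 | h1⟩ | ⟨h1, h0 | h0⟩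
  · exact ⟨x, y, rfl, Or.inl ⟨h0, h1⟩⟩
  · exact ⟨y, x, Sym2.eq_swap, Or.inl ⟨h0.symm, h1⟩⟩
  · exact ⟨x, y, rfl, Or.inr ⟨h0, h1⟩⟩
  · exact ⟨y, x, Sym2.eq_swap, Or.inr ⟨h0, h1.symm⟩⟩

lemma gridGraph_two_fourCycle_alternates {a b c d : ∀ i, Fin (n i)} (hab : (gridGraph n).Adj a b)
    (hbc : (gridGraph n).Adj b c) (hcd : (gridGraph n).Adj c d) (hda : (gridGraph n).Adj d a)
    (hac : a ≠ c) (hbd : b ≠ d) :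
    (a 0 = b 0 ∧ b 1 = c 1 ∧ c 0 = d 0 ∧ d 1 = a 1) ∨
      (a 1 = b 1 ∧ b 0 = c 0 ∧ c 1 = d 1 ∧ d 0 = a 0) := by
  rw [gridGraph_two_adj_iff] at hab hbc hcd hda
  rw [Ne, funext_iff, Fin.forall_fin_two] at hac hbd
  simp only [Fin.ext_iff] at hab hbc hcd hda hac hbd ⊢
  omega

end TwoDimensionalGrid

local notation "Q₂" => gridGraph (fun _ : Fin 2 => (2 : ℕ))

lemma edgeSet_Q₂ : (Q₂).edgeSet =
    {s(![0, 0], ![0, 1]), s(![0, 1], ![1, 1]), s(![1, 1], ![1, 0]), s(![1, 0], ![0, 0])} := by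
  ext e
  induction e using Sym2.ind with | h x y =>
  rw [mem_edgeSet, gridGraph_two_adj_iff]
  simp only [Set.mem_insert_iff, Set.mem_singleton_iff, Sym2.eq_iff]
  revert x y
  decide

lemma finsum_edgeSet_Q₂ {M : Type*} [AddCommMonoid M] (F : Sym2 (Fin 2 → Fin 2) → M) :
    ∑ᶠ e ∈ (Q₂).edgeSet, F e =
      F s(![0, 0], ![0, 1]) + F s(![0, 1], ![1, 1]) + F s(![1, 1], ![1, 0]) +
        F s(![1, 0], ![0, 0]) := by
  rw [edgeSet_Q₂, finsum_mem_insert _ (by decide) (Set.toFinite _),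
    finsum_mem_insert _ (by decide) (Set.toFinite _), finsum_mem_pair (by decide)]
  abel

lemma SimpleGraph.Subgraph.finsum_edgeSet_eq_of_iso {V W M : Type*} [AddCommMonoid M]
    {G : SimpleGraph V} {H : SimpleGraph W} {G' : G.Subgraph} (f : G'.coe ≃g H)
    (g : Sym2 V → M) :
    ∑ᶠ e ∈ G'.edgeSet, g e = ∑ᶠ e ∈ H.edgeSet, g (e.map fun w => (f.symm w : V)) := by
  have hinj : Function.Injective fun w => (f.symm w : V) :=
    Subtype.val_injective.comp f.symm.injective
  have himage : G'.edgeSet = Sym2.map (fun w => (f.symm w : V)) '' H.edgeSet := by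
    rw [← G'.image_coe_edgeSet_coe, ← f.toEmbedding.preimage_edgeSet,
      ← Set.image_eq_preimage_of_inverse (f := Sym2.map f.symm), Set.image_image]
    · simp only [Sym2.map_map]; rfl
    · intro e; simp [Sym2.map_map]
    · intro e; simp [Sym2.map_map]
  rw [himage, finsum_mem_image (Sym2.map.injective hinj).injOn]

lemma Int.eq_and_eq_of_mul_add_eq_mul_add {B q r q' r' : ℤ} (hr : 0 ≤ r) (hrB : r < B)
    (hr' : 0 ≤ r') (hr'B : r' < B) (h : q * B + r = q' * B + r') : q = q' ∧ r = r' := by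
  have hB : 0 < B := by omega
  obtain ⟨hq₁, hr₁⟩ := (Int.ediv_emod_unique hB).2 ⟨(by ring : r + B * q = q * B + r), hr, hrB⟩
  obtain ⟨hq₂, hr₂⟩ := (Int.ediv_emod_unique hB).2 ⟨(by linarith : r' + B * q' = q * B + r), hr', hr'B⟩
  exact ⟨hq₁.symm.trans hq₂, hr₁.symm.trans hr₂⟩

lemma Set.BijOn.Icc_one_ncard {α : Type*} {s : Set α} {g : α → ℤ} {T : ℤ}
    (h : Set.BijOn g s (Set.Icc 1 T)) : Set.BijOn g s (Set.Icc 1 (s.ncard : ℤ)) := by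
  have hcard : (s.ncard : ℤ) = max T 0 := by
    rw [← h.injOn.ncard_image, h.image_eq, ← Finset.coe_Icc, Set.ncard_coe_finset,
      Int.card_Icc]
    omega
  have hIcc : Set.Icc (1 : ℤ) (max T 0) = Set.Icc 1 T := by
    ext
    simp only [Set.mem_Icc]
    omega
  rwa [hcard, hIcc]

abbrev GridVertex (n₁ n₂ : ℕ) := ∀ i : Fin 2, Fin (![n₁, n₂] i)

def gridVertex {n₁ n₂ : ℕ} (a : Fin n₁) (b : Fin n₂) : GridVertex n₁ n₂ :=
  Fin.cons a (Fin.cons b finZeroElim)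

@[simp] lemma gridVertex_zero {n₁ n₂ : ℕ} (a : Fin n₁) (b : Fin n₂) : gridVertex a b 0 = a := rfl
@[simp] lemma gridVertex_one {n₁ n₂ : ℕ} (a : Fin n₁) (b : Fin n₂) : gridVertex a b 1 = b := rfl

lemma GridVertex.val_zero_lt {n₁ n₂ : ℕ} (x : GridVertex n₁ n₂) : (x 0 : ℕ) < n₁ := (x 0).isLt
lemma GridVertex.val_one_lt {n₁ n₂ : ℕ} (x : GridVertex n₁ n₂) : (x 1 : ℕ) < n₂ := (x 1).isLt

structure IsBaseLabeling (n₁ n₂ : ℕ) (g : Sym2 (GridVertex n₁ n₂) → ℤ) : Prop where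
  horizontal : ∀ x y : GridVertex n₁ n₂, x 0 = y 0 → (x 1 : ℕ) + 1 = (y 1 : ℕ) →
    g s(x, y) = ((x 0 : ℕ) : ℤ) * (2 * n₂ - 1) + (((x 1 : ℕ) : ℤ) + 1)
  vertical : ∀ x y : GridVertex n₁ n₂, (x 0 : ℕ) + 1 = (y 0 : ℕ) → x 1 = y 1 →
    g s(x, y) = ((n₁ : ℤ) - (((x 0 : ℕ) : ℤ) + 1)) * (2 * n₂ - 1) + 1 - (((x 1 : ℕ) : ℤ) + 1)

namespace IsBaseLabeling

variable {n₁ n₂ : ℕ} {g : Sym2 (GridVertex n₁ n₂) → ℤ}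

lemma two_mul_of_apply_zero_eq (hg : IsBaseLabeling n₁ n₂ g) {x y : GridVertex n₁ n₂}
    (hxy : (gridGraph ![n₁, n₂]).Adj x y) (h0 : x 0 = y 0) :
    2 * g s(x, y) =
      2 * ((x 0 : ℕ) : ℤ) * (2 * n₂ - 1) + ((x 1 : ℕ) : ℤ) + ((y 1 : ℕ) : ℤ) + 1 := by
  rcases gridGraph_two_adj_iff.1 hxy with ⟨-, h1 | h1⟩ | ⟨h1, h0' | h0'⟩
  · rw [hg.horizontal x y h0 h1, ← h1]
    push_cast
    ring
  · rw [Sym2.eq_swap, hg.horizontal y x h0.symm h1, ← h0, ← h1]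
    push_cast
    ring
  all_goals rw [h0] at h0'; omega

lemma two_mul_of_apply_one_eq (hg : IsBaseLabeling n₁ n₂ g) {x y : GridVertex n₁ n₂}
    (hxy : (gridGraph ![n₁, n₂]).Adj x y) (h1 : x 1 = y 1) :
    2 * g s(x, y) =
      (2 * n₁ - 1 - ((x 0 : ℕ) : ℤ) - ((y 0 : ℕ) : ℤ)) * (2 * n₂ - 1) - 2 * ((x 1 : ℕ) : ℤ) := by
  rcases gridGraph_two_adj_iff.1 hxy with ⟨h0, h1' | h1'⟩ | ⟨-, h0 | h0⟩
  any_goals rw [h1] at h1'; omega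
  · rw [hg.vertical x y h0 h1, ← h0]
    push_cast
    ring
  · rw [Sym2.eq_swap, hg.vertical y x h0 h1.symm, ← h0, ← h1]
    push_cast
    ring

lemma fourCycle_sum (hg : IsBaseLabeling n₁ n₂ g) {a b c d : GridVertex n₁ n₂}
    (hab : (gridGraph ![n₁, n₂]).Adj a b) (hbc : (gridGraph ![n₁, n₂]).Adj b c)
    (hcd : (gridGraph ![n₁, n₂]).Adj c d) (hda : (gridGraph ![n₁, n₂]).Adj d a)
    (hac : a ≠ c) (hbd : b ≠ d) :
    g s(a, b) + g s(b, c) + g s(c, d) + g s(d, a) = (2 * n₁ - 1) * (2 * n₂ - 1) + 1 := by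
  suffices 2 * (g s(a, b) + g s(b, c) + g s(c, d) + g s(d, a)) =
      2 * ((2 * n₁ - 1) * (2 * n₂ - 1) + 1) by linarith
  rcases gridGraph_two_fourCycle_alternates hab hbc hcd hda hac hbd with
    ⟨hab', hbc', hcd', hda'⟩ | ⟨hab', hbc', hcd', hda'⟩
  · have e₁ := hg.two_mul_of_apply_zero_eq hab hab'
    have e₂ := hg.two_mul_of_apply_one_eq hbc hbc'
    have e₃ := hg.two_mul_of_apply_zero_eq hcd hcd'
    have e₄ := hg.two_mul_of_apply_one_eq hda hda'
    simp only [hab', hbc', hcd', hda'] at e₁ e₂ e₃ e₄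
    linarith
  · have e₁ := hg.two_mul_of_apply_one_eq hab hab'
    have e₂ := hg.two_mul_of_apply_zero_eq hbc hbc'
    have e₃ := hg.two_mul_of_apply_one_eq hcd hcd'
    have e₄ := hg.two_mul_of_apply_zero_eq hda hda'
    simp only [hab', hbc', hcd', hda'] at e₁ e₂ e₃ e₄
    linarith

lemma finsum_edgeSet_eq_of_iso (hg : IsBaseLabeling n₁ n₂ g)
    {G' : (gridGraph ![n₁, n₂]).Subgraph} (f : G'.coe ≃g Q₂) :
    ∑ᶠ e ∈ G'.edgeSet, g e = (2 * n₁ - 1) * (2 * n₂ - 1) + 1 := by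
  set φ : (Fin 2 → Fin 2) → GridVertex n₁ n₂ := fun w => (f.symm w : GridVertex n₁ n₂)
  have hinj : Function.Injective φ := Subtype.val_injective.comp f.symm.injective
  have hadj {v w : Fin 2 → Fin 2} (h : s(v, w) ∈ (Q₂).edgeSet) :
      (gridGraph ![n₁, n₂]).Adj (φ v) (φ w) :=
    G'.adj_sub (f.symm.map_adj_iff.2 h)
  rw [G'.finsum_edgeSet_eq_of_iso f, finsum_edgeSet_Q₂]
  simp only [Sym2.map_mk]
  exact hg.fourCycle_sum (hadj (by simp [edgeSet_Q₂])) (hadj (by simp [edgeSet_Q₂]))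
    (hadj (by simp [edgeSet_Q₂])) (hadj (by simp [edgeSet_Q₂])) (hinj.ne (by decide))
    (hinj.ne (by decide))

lemma mapsTo (hg : IsBaseLabeling n₁ n₂ g) :
    Set.MapsTo g (gridGraph ![n₁, n₂]).edgeSet (Set.Icc 1 (2 * n₁ * n₂ - n₁ - n₂)) := by
  intro e he
  obtain ⟨x, y, rfl, hxy⟩ := gridGraph_two_exists_oriented_edge he
  have hx0 : ((x 0 : ℕ) : ℤ) < n₁ := by exact_mod_cast GridVertex.val_zero_lt x
  have hy0 : ((y 0 : ℕ) : ℤ) < n₁ := by exact_mod_cast GridVertex.val_zero_lt y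
  have hx1 : ((x 1 : ℕ) : ℤ) < n₂ := by exact_mod_cast GridVertex.val_one_lt x
  have hy1 : ((y 1 : ℕ) : ℤ) < n₂ := by exact_mod_cast GridVertex.val_one_lt y
  have hx0' : 0 ≤ ((x 0 : ℕ) : ℤ) := Int.natCast_nonneg _
  have hx1' : 0 ≤ ((x 1 : ℕ) : ℤ) := Int.natCast_nonneg _
  rcases hxy with ⟨h0, h1⟩ | ⟨h0, h1⟩
  · have h1' : ((x 1 : ℕ) : ℤ) + 1 = (y 1 : ℕ) := by exact_mod_cast h1
    rw [hg.horizontal x y h0 h1]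
    constructor <;> nlinarith
  · have h0' : ((x 0 : ℕ) : ℤ) + 1 = (y 0 : ℕ) := by exact_mod_cast h0
    rw [hg.vertical x y h0 h1]
    constructor <;> nlinarith

lemma exists_quotient_remainder (hg : IsBaseLabeling n₁ n₂ g) {e : Sym2 (GridVertex n₁ n₂)}
    (he : e ∈ (gridGraph ![n₁, n₂]).edgeSet) :
    ∃ x y : GridVertex n₁ n₂, e = s(x, y) ∧ ∃ q r : ℤ,
      g e = q * (2 * n₂ - 1) + r + 1 ∧ 0 ≤ r ∧ r < 2 * n₂ - 1 ∧
      (r + 2 ≤ n₂ ∧ ((x 0 : ℕ) : ℤ) = q ∧ ((x 1 : ℕ) : ℤ) = r ∧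
          ((y 0 : ℕ) : ℤ) = q ∧ ((y 1 : ℕ) : ℤ) = r + 1 ∨
        n₂ ≤ r + 1 ∧ ((x 0 : ℕ) : ℤ) = n₁ - 2 - q ∧ ((x 1 : ℕ) : ℤ) = 2 * n₂ - 2 - r ∧
          ((y 0 : ℕ) : ℤ) = n₁ - 1 - q ∧ ((y 1 : ℕ) : ℤ) = 2 * n₂ - 2 - r) := by
  obtain ⟨x, y, rfl, hxy⟩ := gridGraph_two_exists_oriented_edge he
  have hx1 : (x 1 : ℕ) < n₂ := GridVertex.val_one_lt x
  have hy0 : (y 0 : ℕ) < n₁ := GridVertex.val_zero_lt y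
  have hy1 : (y 1 : ℕ) < n₂ := GridVertex.val_one_lt y
  refine ⟨x, y, rfl, ?_⟩
  rcases hxy with ⟨h0, h1⟩ | ⟨h0, h1⟩
  · refine ⟨(x 0 : ℕ), (x 1 : ℕ), by rw [hg.horizontal x y h0 h1]; ring,
      by omega, by omega, Or.inl ?_⟩
    rw [← h0]
    omega
  · refine ⟨n₁ - 2 - (x 0 : ℕ), 2 * n₂ - 2 - (x 1 : ℕ), by rw [hg.vertical x y h0 h1]; ring,
      by omega, by omega, Or.inr ?_⟩
    rw [← h1]
    omega

lemma injOn (hg : IsBaseLabeling n₁ n₂ g) : Set.InjOn g (gridGraph ![n₁, n₂]).edgeSet := by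
  intro e he e' he' hee'
  obtain ⟨x, y, rfl, q, r, hgqr, hr, hrB, hxy⟩ := hg.exists_quotient_remainder he
  obtain ⟨x', y', rfl, q', r', hgqr', hr', hrB', hxy'⟩ := hg.exists_quotient_remainder he'
  obtain ⟨rfl, rfl⟩ := Int.eq_and_eq_of_mul_add_eq_mul_add (q := q) (q' := q') hr hrB hr' hrB'
    (by linarith)
  have hx : x = x' := by
    rw [funext_iff, Fin.forall_fin_two, Fin.ext_iff, Fin.ext_iff]
    omega
  have hy : y = y' := by
    rw [funext_iff, Fin.forall_fin_two, Fin.ext_iff, Fin.ext_iff]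
    omega
  rw [hx, hy]

lemma exists_of_quotient_remainder (hg : IsBaseLabeling n₁ n₂ g) {q r : ℤ} (hq : 0 ≤ q)
    (hr : 0 ≤ r) (hrB : r < 2 * n₂ - 1) (hT : q * (2 * n₂ - 1) + r < 2 * n₁ * n₂ - n₁ - n₂) :
    ∃ e ∈ (gridGraph ![n₁, n₂]).edgeSet, g e = q * (2 * n₂ - 1) + r + 1 := by
  by_cases hr₂ : r + 2 ≤ n₂
  · have hq₁ : q < n₁ := by nlinarith
    let x : GridVertex n₁ n₂ := gridVertex ⟨q.toNat, by omega⟩ ⟨r.toNat, by omega⟩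
    let y : GridVertex n₁ n₂ := gridVertex ⟨q.toNat, by omega⟩ ⟨(r + 1).toNat, by omega⟩
    have h1 : (x 1 : ℕ) + 1 = y 1 := by simp only [x, y, gridVertex_one]; omega
    refine ⟨s(x, y), gridGraph_two_adj_iff.2 (Or.inl ⟨rfl, Or.inl h1⟩), ?_⟩
    rw [hg.horizontal x y rfl h1]
    simp only [x, gridVertex_zero, gridVertex_one, Int.toNat_of_nonneg hq, Int.toNat_of_nonneg hr]
    ring
  · have hq₁ : q + 2 ≤ n₁ := by nlinarith
    let x : GridVertex n₁ n₂ :=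
      gridVertex ⟨(n₁ - 2 - q).toNat, by omega⟩ ⟨(2 * n₂ - 2 - r).toNat, by omega⟩
    let y : GridVertex n₁ n₂ :=
      gridVertex ⟨(n₁ - 1 - q).toNat, by omega⟩ ⟨(2 * n₂ - 2 - r).toNat, by omega⟩
    have h0 : (x 0 : ℕ) + 1 = y 0 := by simp only [x, y, gridVertex_zero]; omega
    refine ⟨s(x, y), gridGraph_two_adj_iff.2 (Or.inr ⟨rfl, Or.inl h0⟩), ?_⟩
    rw [hg.vertical x y h0 rfl]
    simp only [x, gridVertex_zero, gridVertex_one,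
      Int.toNat_of_nonneg (by omega : 0 ≤ (n₁ : ℤ) - 2 - q),
      Int.toNat_of_nonneg (by omega : 0 ≤ 2 * (n₂ : ℤ) - 2 - r)]
    ring

lemma surjOn (hg : IsBaseLabeling n₁ n₂ g) :
    Set.SurjOn g (gridGraph ![n₁, n₂]).edgeSet (Set.Icc 1 (2 * n₁ * n₂ - n₁ - n₂)) := by
  rintro m ⟨hm₁, hmT⟩
  have hB : 0 < 2 * (n₂ : ℤ) - 1 := by nlinarith
  obtain ⟨e, he, hge⟩ := hg.exists_of_quotient_remainder
    (Int.ediv_nonneg (by omega : 0 ≤ m - 1) hB.le)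
    (Int.emod_nonneg (m - 1) hB.ne') (Int.emod_lt_of_pos (m - 1) hB)
    (by linarith [Int.ediv_mul_add_emod (m - 1) (2 * n₂ - 1)])
  exact ⟨e, he, by linarith [Int.ediv_mul_add_emod (m - 1) (2 * n₂ - 1)]⟩

lemma bijOn (hg : IsBaseLabeling n₁ n₂ g) :
    Set.BijOn g (gridGraph ![n₁, n₂]).edgeSet (Set.Icc 1 (2 * n₁ * n₂ - n₁ - n₂)) :=
  ⟨hg.mapsTo, hg.injOn, hg.surjOn⟩

end IsBaseLabeling

theorem base_case_edge_labeling_is_magic_general (n₁ n₂ : ℕ)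
    (g : Sym2 (∀ i : Fin 2, Fin (![n₁, n₂] i)) → ℤ)
    (hgh : ∀ x y : ∀ i : Fin 2, Fin (![n₁, n₂] i), x 0 = y 0 →
      (x 1 : ℕ) + 1 = (y 1 : ℕ) →
      g s(x, y) = ((x 0 : ℕ) : ℤ) * (2 * n₂ - 1) + (((x 1 : ℕ) : ℤ) + 1))
    (hgv : ∀ x y : ∀ i : Fin 2, Fin (![n₁, n₂] i), (x 0 : ℕ) + 1 = (y 0 : ℕ) →
      x 1 = y 1 →
      g s(x, y) = ((n₁ : ℤ) - (((x 0 : ℕ) : ℤ) + 1)) * (2 * n₂ - 1) + 1 -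
        (((x 1 : ℕ) : ℤ) + 1)) :
    IsMagicEdgeLabeling (gridGraph ![n₁, n₂]) (gridGraph (fun _ : Fin 2 => (2 : ℕ))) g
      ((2 * (n₁ : ℤ) - 1) * (2 * (n₂ : ℤ) - 1) + 1) := by
  have hg : IsBaseLabeling n₁ n₂ g := ⟨hgh, hgv⟩
  exact ⟨hg.bijOn.Icc_one_ncard, fun _ ⟨f⟩ => hg.finsum_edgeSet_eq_of_iso f⟩

/-- the edge labeling `g` of `Grid(n₁,n₂)` given by
`g({(i,j),(i,j+1)}) = (i-1)(2n₂-1) + j` on horizontal edges and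
`g({(i,j),(i+1,j)}) = (n₁-i)(2n₂-1) + 1 - j` on vertical edges (where a vertex `v` has
coordinates `i = v 0 + 1`, `j = v 1 + 1`) is a `Q₂`-magic edge labeling of `Grid(n₁,n₂)`
with `Q₂`-magic sum `(2n₁-1)(2n₂-1) + 1`. -/
theorem base_case_edge_labeling_is_magic (n₁ n₂ : ℕ) (h₁ : 2 ≤ n₁) (h₂ : 2 ≤ n₂)
    (g : Sym2 (∀ i : Fin 2, Fin (![n₁, n₂] i)) → ℤ)
    (hgh : ∀ x y : ∀ i : Fin 2, Fin (![n₁, n₂] i), x 0 = y 0 →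
      (x 1 : ℕ) + 1 = (y 1 : ℕ) →
      g s(x, y) = ((x 0 : ℕ) : ℤ) * (2 * n₂ - 1) + (((x 1 : ℕ) : ℤ) + 1))
    (hgv : ∀ x y : ∀ i : Fin 2, Fin (![n₁, n₂] i), (x 0 : ℕ) + 1 = (y 0 : ℕ) →
      x 1 = y 1 →
      g s(x, y) = ((n₁ : ℤ) - (((x 0 : ℕ) : ℤ) + 1)) * (2 * n₂ - 1) + 1 -
        (((x 1 : ℕ) : ℤ) + 1)) :
    IsMagicEdgeLabeling (gridGraph ![n₁, n₂]) (gridGraph (fun _ : Fin 2 => (2 : ℕ))) g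
      ((2 * (n₁ : ℤ) - 1) * (2 * (n₂ : ℤ) - 1) + 1) :=
  base_case_edge_labeling_is_magic_general n₁ n₂ g hgh hgv
end

section
/- Let d ≥ 2 and n_1,...,n_d ≥ 2 be integers. A subgraph H of Grid(n_1,...,n_d) is isomorphic to Q_d if and only if there exists (x_1,...,x_d) ∈ [n_1-1]×⋯×[n_d-1] such that the vertex set of H is {(x_1+ε_1,...,x_d+ε_d) : (ε_1,...,ε_d) ∈ {0,1}^d} and H contains all edges of Grid(n_1,...,n_d) between these vertices. -/
/-!
Read grid vertices as points of `ℤᵈ` and index the vertices of a copy of `Q_d` by subsets of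
the coordinates. Every cube edge is sent to a unit step `±eᵢ`. In a square of the cube the two
paths between opposite corners are pairs of unit steps with the same nonzero sum and different
first steps, which forces opposite sides to be equal. Hence the step in a cube direction `j` does
not depend on where it is taken, the copy is `s ↦ f ∅ + ∑ j ∈ s, ±e_{axis j}`, and injectivity
makes `axis` a permutation. So every copy of `Q_d` is the standard embedding of `{0,1}ᵈ` onto a
box, precomposed with an automorphism of `Q_d`; its vertex set is the box and it is induced.
Conversely, an induced subgraph on a box is the image of that standard embedding.
-/

open Function Finset

section UnitStep

variable {κ : Type*} [DecidableEq κ]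

def IsUnitStep (w : κ → ℤ) : Prop :=
  ∃ i s, (s = 1 ∨ s = -1) ∧ w = Pi.single i s

namespace IsUnitStep

variable {w : κ → ℤ}

lemma apply_trichotomy (h : IsUnitStep w) (i : κ) : w i = 0 ∨ w i = 1 ∨ w i = -1 := by
  obtain ⟨k, s, hs, rfl⟩ := h
  by_cases hik : i = k
  · subst hik; simp only [Pi.single_eq_same]; omega
  · simp [Pi.single_eq_of_ne hik]

lemma eq_single_of_apply_ne_zero (h : IsUnitStep w) {i : κ} (hi : w i ≠ 0) :
    w = Pi.single i (w i) := by
  obtain ⟨k, s, -, rfl⟩ := h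
  obtain rfl : i = k := by_contra fun hik => hi (by simp [hik])
  simp

/-- `a, b` and `c, e` are the two paths along the sides of a square between opposite corners. -/
lemma eq_of_add_eq_add {a b c e : κ → ℤ} (ha : IsUnitStep a) (hb : IsUnitStep b)
    (hc : IsUnitStep c) (he : IsUnitStep e) (h : a + b = c + e) (h0 : a + b ≠ 0) (hac : a ≠ c) :
    a = e := by
  obtain ⟨i, s, hs, rfl⟩ := ha
  have hi : s + b i = c i + e i := by simpa using congrFun h i
  have hbi : b i ≠ -s := fun hbi => h0 <| by
    rw [hb.eq_single_of_apply_ne_zero (i := i) (by omega), hbi, ← Pi.single_add, add_neg_cancel,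
      Pi.single_zero]
  have hci : c i ≠ s := fun hci => hac <| by
    rw [hc.eq_single_of_apply_ne_zero (i := i) (by omega), hci]
  have hei : e i = s := by
    have := hb.apply_trichotomy i; have := hc.apply_trichotomy i; have := he.apply_trichotomy i
    omega
  rw [he.eq_single_of_apply_ne_zero (i := i) (by omega), hei]

end IsUnitStep

end UnitStep

section LatticeCube

variable {ι κ : Type*} [DecidableEq ι] [DecidableEq κ]

structure IsLatticeCube (g : Finset ι → κ → ℤ) : Prop where
  injective : Injective g
  isUnitStep : ∀ s j, j ∉ s → IsUnitStep (g (insert j s) - g s)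

namespace IsLatticeCube

variable {g : Finset ι → κ → ℤ}

lemma insert_sub_eq (hg : IsLatticeCube g) {s : Finset ι} {j : ι} (hj : j ∉ s) :
    g (insert j s) - g s = g {j} - g ∅ := by
  induction s using Finset.induction_on with
  | empty => rfl
  | @insert k t hk ih =>
    obtain ⟨hjk, hjt⟩ : j ≠ k ∧ j ∉ t := by simpa using hj
    have hkj : k ∉ insert j t := by simp [hk, Ne.symm hjk]
    rw [← ih hjt]
    refine (IsUnitStep.eq_of_add_eq_add (hg.isUnitStep t j hjt) (hg.isUnitStep _ k hkj)
      (hg.isUnitStep t k hk) (hg.isUnitStep _ j hj) ?_ ?_ ?_).symm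
    · rw [Finset.insert_comm]; abel
    · rw [sub_add_sub_cancel', sub_ne_zero]
      exact hg.injective.ne fun h => hk (h ▸ mem_insert_self k _)
    · refine sub_left_injective.ne (hg.injective.ne fun h => ?_)
      have := h ▸ mem_insert_self j t
      simp_all

lemma eq_add_sum (hg : IsLatticeCube g) (s : Finset ι) :
    g s = g ∅ + ∑ j ∈ s, (g {j} - g ∅) := by
  induction s using Finset.induction_on with
  | empty => simp
  | @insert k t hk ih =>
    rw [sum_insert hk, ← hg.insert_sub_eq hk, ih]
    abel

lemma exists_axis (hg : IsLatticeCube g) :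
    ∃ (axis : ι → κ) (sign : ι → ℤ), Injective axis ∧ (∀ j, sign j = 1 ∨ sign j = -1) ∧
      ∀ s k, g s (axis k) = g ∅ (axis k) + if k ∈ s then sign k else 0 := by
  choose axis sign hsign hstep using fun j => hg.isUnitStep ∅ j (notMem_empty j)
  have hsum (s : Finset ι) : g s = g ∅ + ∑ j ∈ s, Pi.single (axis j) (sign j) := by
    rw [hg.eq_add_sum s]
    exact congrArg _ (sum_congr rfl fun j _ => hstep j)
  have haxis : Injective axis := by
    intro j k hjk
    by_contra hne
    by_cases hsjk : sign j = sign k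
    · exact hne <| singleton_injective <| hg.injective <| by
        rw [hsum {j}, hsum {k}]; simp [hjk, hsjk]
    · have hopp : sign j + sign k = 0 := by
        rcases hsign j with h | h <;> rcases hsign k with h' | h' <;> omega
      refine insert_ne_empty j {k} (hg.injective ?_)
      rw [hsum {j, k}, sum_pair hne, hjk, ← Pi.single_add, hopp]
      simp
  refine ⟨axis, sign, haxis, hsign, fun s k => ?_⟩
  rw [hsum s]
  simp [Finset.sum_apply, Pi.single_apply, haxis.eq_iff]

end IsLatticeCube

end LatticeCube

namespace SimpleGraph.Subgraph

variable {V W : Type*} {G : SimpleGraph V} {G' : SimpleGraph W} {H : G'.Subgraph}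

lemma isInduced_and_verts_eq_range (e : H.coe ≃g G) (f : G ↪g G')
    (hf : ∀ a, (e.symm a : W) = f a) : H.IsInduced ∧ H.verts = Set.range f := by
  have hverts : H.verts = Set.range f := by
    ext v
    refine ⟨fun hv => ⟨e ⟨v, hv⟩, by rw [← hf, e.symm_apply_apply]⟩, ?_⟩
    rintro ⟨a, rfl⟩
    exact hf a ▸ (e.symm a).2
  refine ⟨fun u hu v hv huv => ?_, hverts⟩
  obtain ⟨a, rfl⟩ := hverts ▸ hu
  obtain ⟨b, rfl⟩ := hverts ▸ hv
  rw [← hf, ← hf]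
  exact e.symm.map_adj_iff.mpr (f.map_adj_iff.mp huv)

lemma IsInduced.nonempty_iso_of_verts_eq_range (hH : H.IsInduced) (f : G ↪g G')
    (hverts : H.verts = Set.range f) : Nonempty (H.coe ≃g G) :=
  ⟨.symm
    { toEquiv := (Equiv.ofInjective f f.injective).trans (Equiv.setCongr hverts.symm)
      map_rel_iff' := hH.adj.trans f.map_adj_iff }⟩

end SimpleGraph.Subgraph

abbrev hypercube (d : ℕ) : SimpleGraph (Fin d → Fin 2) := gridGraph fun _ => 2

section Hypercube

variable {d : ℕ} {n : Fin d → ℕ}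

lemma hypercube_adj_iff {a b : Fin d → Fin 2} :
    (hypercube d).Adj a b ↔ ∃ i, a i ≠ b i ∧ ∀ j ≠ i, a j = b j := by
  refine exists_congr fun i => and_congr_left' ?_
  have := (a i).isLt; have := (b i).isLt
  rw [Ne, Fin.ext_iff]
  omega

lemma isUnitStep_of_gridGraph_adj {u v : ∀ i, Fin (n i)} (h : (gridGraph n).Adj u v) :
    IsUnitStep fun i => (v i : ℤ) - u i := by
  obtain ⟨i, hi, hj⟩ := h
  refine ⟨i, v i - u i, by omega, funext fun k => ?_⟩
  by_cases hki : k = i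
  · subst hki; simp
  · simp [hki, hj k hki]

def cubeVertex (s : Finset (Fin d)) : Fin d → Fin 2 := fun j => if j ∈ s then 1 else 0

lemma cubeVertex_injective : Injective (cubeVertex (d := d)) := fun s t h => by
  ext j
  have := congrFun h j
  by_cases hs : j ∈ s <;> by_cases ht : j ∈ t <;> simp_all [cubeVertex]

lemma cubeVertex_empty : cubeVertex (∅ : Finset (Fin d)) = fun _ => 0 :=
  funext fun _ => if_neg (notMem_empty _)

lemma cubeVertex_filter_eq_one (ε : Fin d → Fin 2) : cubeVertex {j | ε j = 1} = ε := by
  funext j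
  by_cases h : ε j = 1 <;> simp [cubeVertex, h]
  omega

lemma hypercube_adj_cubeVertex_insert {s : Finset (Fin d)} {j : Fin d} (hj : j ∉ s) :
    (hypercube d).Adj (cubeVertex s) (cubeVertex (insert j s)) :=
  hypercube_adj_iff.mpr ⟨j, by simp [cubeVertex, hj], fun k hk => by simp [cubeVertex, hk]⟩

namespace SimpleGraph.Copy

theorem exists_equiv_forall_apply_eq (ψ : Copy (hypercube d) (gridGraph n)) :
    ∃ e : Fin d ≃ Fin d, ∀ m, ∃ φ : Fin 2 → Fin (n m),
      ((φ 0 : ℕ) + 1 = φ 1 ∨ (φ 1 : ℕ) + 1 = φ 0) ∧ ∀ ε, ψ ε m = φ (ε (e.symm m)) := by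
  let g : Finset (Fin d) → Fin d → ℤ := fun s m => ψ (cubeVertex s) m
  have hg : IsLatticeCube g :=
    ⟨fun s t h => cubeVertex_injective <| ψ.injective <|
      funext fun m => Fin.ext <| Nat.cast_injective (congrFun h m),
     fun s j hj => isUnitStep_of_gridGraph_adj <|
      ψ.toHom.map_adj (hypercube_adj_cubeVertex_insert hj)⟩
  obtain ⟨axis, sign, haxis, hsign, hg_apply⟩ := hg.exists_axis
  have hψ (ε : Fin d → Fin 2) (k : Fin d) :
      (ψ ε (axis k) : ℤ) = ψ (fun _ => 0) (axis k) + if ε k = 1 then sign k else 0 := by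
    simpa [g, cubeVertex_filter_eq_one, cubeVertex_empty] using hg_apply {j | ε j = 1} k
  have hbij : Bijective axis := Finite.injective_iff_bijective.mp haxis
  refine ⟨.ofBijective axis hbij, fun m => ⟨fun b => ψ (fun _ => b) m, ?_, fun ε => ?_⟩⟩
  all_goals obtain ⟨k, rfl⟩ := hbij.surjective m
  · have h1 := hψ (fun _ => 1) k
    have := hsign k
    dsimp only
    omega
  · have h := hψ (fun _ => ε k) k
    rw [Equiv.ofBijective_symm_apply_apply]
    exact Fin.ext (Nat.cast_injective ((hψ ε k).trans h.symm))

end SimpleGraph.Copy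

lemma exists_eq_sub_one_add {N : ℕ} (φ : Fin 2 → Fin N)
    (hφ : (φ 0 : ℕ) + 1 = φ 1 ∨ (φ 1 : ℕ) + 1 = φ 0) :
    ∃ (x : ℕ) (c : Fin 2), (1 ≤ x ∧ x ≤ N - 1) ∧ ∀ b, (φ b : ℕ) = x - 1 + (b + c : Fin 2) := by
  have := (φ 0).isLt; have := (φ 1).isLt
  rcases hφ with h | h
  · exact ⟨φ 1, 0, by omega, fun b => by fin_cases b <;> simp <;> omega⟩
  · exact ⟨φ 0, 1, by omega, fun b => by fin_cases b <;> simp <;> omega⟩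

/-- `x` is the lowest corner of the box in the `1`-based coordinates of the statement. -/
def boxEmbedding (x : Fin d → ℕ) (hx : ∀ i, 1 ≤ x i ∧ x i ≤ n i - 1) :
    hypercube d ↪g gridGraph n where
  toFun ε i := ⟨x i - 1 + ε i, by have := hx i; have := (ε i).isLt; omega⟩
  inj' a b h := funext fun i => Fin.ext <| by
    have := congrArg Fin.val (congrFun h i)
    dsimp only at this
    omega
  map_rel_iff' {a b} := by
    change (gridGraph n).Adj (fun i => ⟨x i - 1 + a i, _⟩) (fun i => ⟨x i - 1 + b i, _⟩) ↔ _
    refine exists_congr fun i => and_congr ?_ (forall₂_congr fun j _ => ?_)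
    · have := hx i
      dsimp only
      omega
    · have := hx j
      simp only [Fin.ext_iff]
      omega

lemma boxEmbedding_apply_val (x : Fin d → ℕ) (hx : ∀ i, 1 ≤ x i ∧ x i ≤ n i - 1)
    (ε : Fin d → Fin 2) (i : Fin d) : (boxEmbedding x hx ε i : ℕ) = x i - 1 + ε i :=
  rfl

lemma range_boxEmbedding (x : Fin d → ℕ) (hx : ∀ i, 1 ≤ x i ∧ x i ≤ n i - 1) :
    Set.range (boxEmbedding x hx) = {v | ∀ i, (v i : ℕ) + 1 = x i ∨ (v i : ℕ) + 1 = x i + 1} := by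
  ext v
  constructor
  · rintro ⟨ε, rfl⟩ i
    have := (ε i).isLt; have := hx i
    rw [boxEmbedding_apply_val]
    omega
  · intro hv
    refine ⟨fun i => ⟨v i + 1 - x i, by have := hv i; omega⟩, funext fun i => Fin.ext ?_⟩
    have := hv i; have := hx i
    rw [boxEmbedding_apply_val]
    dsimp only
    omega

def cubeAut (e : Fin d ≃ Fin d) (c : Fin d → Fin 2) : hypercube d ≃g hypercube d where
  toEquiv := (e.arrowCongr (.refl _)).trans (.addRight c)
  map_rel_iff' {a b} := by
    simp only [hypercube_adj_iff, Equiv.trans_apply, Equiv.arrowCongr_apply, Equiv.coe_refl,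
      Equiv.coe_addRight, Pi.add_apply, Function.comp_apply, id_eq, ne_eq, add_left_inj]
    exact e.symm.exists_congr fun i => and_congr_right' <|
      e.symm.forall_congr fun j => by rw [e.symm.injective.eq_iff]

theorem SimpleGraph.Copy.exists_eq_boxEmbedding_comp (ψ : Copy (hypercube d) (gridGraph n)) :
    ∃ (x : Fin d → ℕ) (hx : ∀ i, 1 ≤ x i ∧ x i ≤ n i - 1) (τ : hypercube d ≃g hypercube d),
      ∀ ε, ψ ε = boxEmbedding x hx (τ ε) := by
  obtain ⟨e, hcoord⟩ := ψ.exists_equiv_forall_apply_eq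
  choose φ hφ hψφ using hcoord
  choose x c hx hφx using fun m => exists_eq_sub_one_add (φ m) (hφ m)
  exact ⟨x, hx, cubeAut e c, fun ε => funext fun m => Fin.ext <| by rw [hψφ, hφx]; rfl⟩

end Hypercube

theorem subgraph_iso_cube_iff_general (d : ℕ) (n : Fin d → ℕ)
    (H : (gridGraph n).Subgraph) :
    Nonempty (H.coe ≃g gridGraph (fun _ : Fin d => (2 : ℕ))) ↔
    ∃ x : Fin d → ℕ, (∀ i, 1 ≤ x i ∧ x i ≤ n i - 1) ∧
      H.verts = {v | ∀ i, (v i : ℕ) + 1 = x i ∨ (v i : ℕ) + 1 = x i + 1} ∧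
      (∀ u v, u ∈ H.verts → v ∈ H.verts → (gridGraph n).Adj u v → H.Adj u v) := by
  constructor
  · rintro ⟨e⟩
    let ψ : SimpleGraph.Copy (hypercube d) (gridGraph n) :=
      (H.hom.comp e.symm.toHom).toCopy (Subtype.val_injective.comp e.symm.injective)
    obtain ⟨x, hx, τ, hψ⟩ := ψ.exists_eq_boxEmbedding_comp
    obtain ⟨hind, hverts⟩ := SimpleGraph.Subgraph.isInduced_and_verts_eq_range e
      ((boxEmbedding x hx).comp τ.toEmbedding) hψ
    refine ⟨x, hx, ?_, fun u v hu hv => hind hu hv⟩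
    rw [hverts, ← range_boxEmbedding x hx, SimpleGraph.Embedding.coe_comp]
    exact τ.surjective.range_comp (boxEmbedding x hx)
  · rintro ⟨x, hx, hverts, hind⟩
    have hind' : H.IsInduced := fun u hu v hv => hind u v hu hv
    exact hind'.nonempty_iso_of_verts_eq_range (boxEmbedding x hx)
      (hverts.trans (range_boxEmbedding x hx).symm)

/-- a subgraph `H` of `Grid(n 0, …, n (d-1))` is isomorphic to `Q_d` iff
there is `x ∈ [n 0 - 1] × ⋯ × [n (d-1) - 1]` such that the vertices of `H` are exactly the
`2^d` points `x + ε`, `ε ∈ {0,1}^d` (a vertex `v` having coordinates `(v i) + 1 ∈ [n i]`),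
and `H` contains every edge of the grid between these vertices. -/
theorem subgraph_iso_cube_iff (d : ℕ) (hd : 2 ≤ d) (n : Fin d → ℕ) (hn : ∀ i, 2 ≤ n i)
    (H : (gridGraph n).Subgraph) :
    Nonempty (H.coe ≃g gridGraph (fun _ : Fin d => (2 : ℕ))) ↔
    ∃ x : Fin d → ℕ, (∀ i, 1 ≤ x i ∧ x i ≤ n i - 1) ∧
      H.verts = {v | ∀ i, (v i : ℕ) + 1 = x i ∨ (v i : ℕ) + 1 = x i + 1} ∧
      (∀ u v, u ∈ H.verts → v ∈ H.verts → (gridGraph n).Adj u v → H.Adj u v) :=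
  subgraph_iso_cube_iff_general d n H
end

section
/- Let d ≥ 3 and n_1,...,n_d ≥ 2 be integers, let N = ∏_{i=1}^{d-1} n_i, and let f̃ be a Q_{d-1}-magic vertex labeling of Grid(n_1,...,n_{d-1}) with Q_{d-1}-magic sum S. Define f on [n_1]×⋯×[n_d] by f(x_1,...,x_d) = f̃(x_1,...,x_{d-1}) + (x_d-1)N if x_1+⋯+x_{d-1} is even, and f(x_1,...,x_d) = f̃(x_1,...,x_{d-1}) + (n_d-x_d)N if x_1+⋯+x_{d-1} is odd. Then for every i ∈ [n_d] and every (x_1,...,x_{d-1}) ∈ [n_1-1]×⋯×[n_{d-1}-1], the sum ∑_{ε∈{0,1}^{d-1}} f(x_1+ε_1,...,x_{d-1}+ε_{d-1}, i) equals S + 2^{d-2}(n_d-1)N. -/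
lemma parity_sum_aux (m : ℕ) (p : ℕ) (a b : ℤ) :
    ∑ ε : Fin (m + 1) → Bool,
        (if Even (p + ∑ j, (if ε j then 1 else 0)) then a else b) = 2 ^ m * (a + b) := by
  induction m generalizing p with
  | zero =>
    rw [← Equiv.sum_comp (Equiv.funUnique (Fin 1) Bool).symm]
    simp only [Fin.sum_univ_one, Equiv.funUnique_symm_apply]
    rcases Nat.even_or_odd p with h | h <;>
      simp [Fintype.sum_bool, Nat.even_add_one, h, Nat.not_even_iff_odd, add_comm]
  | succ k ih =>
    rw [← Equiv.sum_comp (Fin.consEquiv fun _ : Fin (k + 2) => Bool)]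
    rw [Fintype.sum_prod_type]
    have h1 : ∀ (c : Bool) (t : Fin (k + 1) → Bool),
        (∑ j, (if (Fin.cons c t : Fin (k+2) → Bool) j then 1 else 0) : ℕ)
          = (if c then 1 else 0) + ∑ j, (if t j then 1 else 0) := by
      intro c t
      rw [Fin.sum_univ_succ]
      simp
    rw [Fintype.sum_bool]
    simp only [Fin.consEquiv_apply, h1, if_true, Bool.false_eq_true, if_false, zero_add,
      ← add_assoc]
    rw [ih p, ih (p + 1)]
    ring

lemma parity_sum (m : ℕ) (hm : 1 ≤ m) (p : ℕ) (a b : ℤ) :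
    ∑ ε : Fin m → Bool,
        (if Even (p + ∑ j, (if ε j then 1 else 0)) then a else b) = 2 ^ (m - 1) * (a + b) := by
  obtain ⟨k, rfl⟩ : ∃ k, m = k + 1 := ⟨m - 1, by omega⟩
  simpa using parity_sum_aux k p a b



/-- The embedding of the index set `Fin (d-1)` (the first `d-1` coordinates) into `Fin d`. -/
def restrIdx (d : ℕ) : Fin (d - 1) → Fin d := Fin.castLE (Nat.sub_le d 1)

/-- The index of the last coordinate in `Fin d` (for `d ≥ 1`). -/
def lastIdx (d : ℕ) (hd : 1 ≤ d) : Fin d := ⟨d - 1, by omega⟩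

/-- Restriction of a grid vertex to its first `d-1` coordinates: a vertex of the
`(d-1)`-dimensional grid `Grid(n 0, …, n (d-2))`. -/
def restrict {d : ℕ} {n : Fin d → ℕ} (x : ∀ i, Fin (n i)) :
    ∀ i : Fin (d - 1), Fin (n (restrIdx d i)) := fun i => x (restrIdx d i)

set_option maxHeartbeats 1600000 in
/-- with `f` the lifted vertex labeling of `Grid(n 0, …, n (d-1))` built from
a `Q_{d-1}`-magic vertex labeling `f̃` with magic sum `S`, for every `i ∈ [n_d]` and every
`(x₁,…,x_{d-1}) ∈ [n₁-1] × ⋯ × [n_{d-1}-1]`, the `2^{d-1}` values of `f` on the vertices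
`(x₁+ε₁, …, x_{d-1}+ε_{d-1}, i)`, `ε ∈ {0,1}^{d-1}`, sum to `S + 2^{d-2}(n_d - 1)N`. -/
theorem induction_step_vertex_layer_sum (d : ℕ) (hd : 3 ≤ d) (n : Fin d → ℕ)
    (hn : ∀ i, 2 ≤ n i) (N : ℕ) (hN : N = ∏ i : Fin (d - 1), n (restrIdx d i))
    (ftil : (∀ i : Fin (d - 1), Fin (n (restrIdx d i))) → ℤ) (S : ℤ)
    (hftil : IsMagicVertexLabeling (gridGraph fun i : Fin (d - 1) => n (restrIdx d i))
      (gridGraph fun _ : Fin (d - 1) => (2 : ℕ)) ftil S)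
    (f : (∀ i, Fin (n i)) → ℤ)
    (hf : ∀ x, f x =
      ftil (restrict x) +
        (if Even (∑ i : Fin (d - 1), ((x (restrIdx d i) : ℕ) + 1)) then
          ((x (lastIdx d (by omega)) : ℕ) : ℤ) * N
        else
          ((n (lastIdx d (by omega)) : ℤ) -
            (((x (lastIdx d (by omega)) : ℕ) : ℤ) + 1)) * N))
    (x : Fin (d - 1) → ℕ) (hx : ∀ j, 1 ≤ x j ∧ x j ≤ n (restrIdx d j) - 1)
    (i : ℕ) (hi : 1 ≤ i ∧ i ≤ n (lastIdx d (by omega)))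
    (v : (Fin (d - 1) → Bool) → ∀ j, Fin (n j))
    (hv : ∀ ε j, ((v ε) (restrIdx d j) : ℕ) + 1 = x j + (if ε j then 1 else 0))
    (hvd : ∀ ε, ((v ε) (lastIdx d (by omega)) : ℕ) + 1 = i) :
    ∑ ε : Fin (d - 1) → Bool, f (v ε)
      = S + 2 ^ (d - 2) * ((n (lastIdx d (by omega)) : ℤ) - 1) * N := by
  classical
  set G := gridGraph fun i : Fin (d - 1) => n (restrIdx d i) with hG
  set Q := gridGraph fun _ : Fin (d - 1) => (2 : ℕ) with hQ
  set w : (Fin (d - 1) → Bool) → (∀ i : Fin (d - 1), Fin (n (restrIdx d i))) :=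
    fun ε => restrict (v ε) with hwdef
  have hw : ∀ ε j, ((w ε j : ℕ)) + 1 = x j + (if ε j then 1 else 0) := fun ε j => hv ε j
  -- injectivity of w
  have winj : Function.Injective w := by
    intro ε ε' h
    funext j
    have hval : (w ε j : ℕ) = (w ε' j : ℕ) := by rw [h]
    have h1 := hw ε j
    have h2 := hw ε' j
    cases hb : ε j <;> cases hb' : ε' j <;> rw [hb] at h1 <;> rw [hb'] at h2 <;>
      simp only [if_true, Bool.false_eq_true, if_false] at h1 h2 <;>
      first | rfl | (exfalso; omega)
  -- adjacency in G
  have hGadj : ∀ ε ε', G.Adj (w ε) (w ε') ↔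
      (∃ i, ε i ≠ ε' i ∧ ∀ j, j ≠ i → ε j = ε' j) := by
    intro ε ε'
    constructor
    · rintro ⟨k, hk1, hk2⟩
      refine ⟨k, ?_, ?_⟩
      · intro hcon
        have h1 := hw ε k
        have h2 := hw ε' k
        rw [hcon] at h1
        omega
      · intro j hj
        have hval : (w ε j : ℕ) = (w ε' j : ℕ) := by rw [hk2 j hj]
        have h1 := hw ε j
        have h2 := hw ε' j
        cases hb : ε j <;> cases hb' : ε' j <;> rw [hb] at h1 <;> rw [hb'] at h2 <;>
          simp only [if_true, Bool.false_eq_true, if_false] at h1 h2 <;>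
          first | rfl | (exfalso; omega)
    · rintro ⟨k, hk1, hk2⟩
      refine ⟨k, ?_, ?_⟩
      · have h1 := hw ε k
        have h2 := hw ε' k
        cases hb : ε k <;> cases hb' : ε' k <;> rw [hb] at h1 hk1 <;> rw [hb'] at h2 hk1 <;>
          simp only [if_true, Bool.false_eq_true, if_false] at h1 h2 <;>
          first | (exact absurd rfl hk1) | omega
      · intro j hj
        have h1 := hw ε j
        have h2 := hw ε' j
        rw [hk2 j hj] at h1
        exact Fin.ext (by omega)
  -- adjacency in Q
  have he : ∀ b : Bool, ((finTwoEquiv.symm b : Fin 2) : ℕ) = if b then 1 else 0 := by decide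
  have hQadj : ∀ ε ε' : Fin (d - 1) → Bool,
      Q.Adj (fun j => finTwoEquiv.symm (ε j)) (fun j => finTwoEquiv.symm (ε' j)) ↔
      (∃ i, ε i ≠ ε' i ∧ ∀ j, j ≠ i → ε j = ε' j) := by
    intro ε ε'
    constructor
    · rintro ⟨k, hk1, hk2⟩
      refine ⟨k, ?_, ?_⟩
      · rw [he (ε k), he (ε' k)] at hk1
        cases hb : ε k <;> cases hb' : ε' k <;> rw [hb] at hk1 <;> rw [hb'] at hk1 <;>
          simp only [if_true, Bool.false_eq_true, if_false] at hk1 <;>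
          simp_all <;> omega
      · intro j hj
        have := congrArg (fun t : Fin 2 => (t : ℕ)) (hk2 j hj)
        simp only [he] at this
        cases hb : ε j <;> cases hb' : ε' j <;> rw [hb] at this <;> rw [hb'] at this <;>
          simp only [if_true, Bool.false_eq_true, if_false] at this <;>
          first | rfl | (exfalso; omega)
    · rintro ⟨k, hk1, hk2⟩
      refine ⟨k, ?_, ?_⟩
      · rw [he (ε k), he (ε' k)]
        cases hb : ε k <;> cases hb' : ε' k <;> simp_all
      · intro j hj
        exact congrArg (fun b => finTwoEquiv.symm b) (hk2 j hj)
  -- the subgraph and the isomorphism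
  set G' : G.Subgraph := (⊤ : G.Subgraph).induce (Set.range w) with hG'
  have hiso : Nonempty (G'.coe ≃g Q) := by
    have key : Nonempty ((G.induce (Set.range w)) ≃g Q) := by
      refine ⟨⟨(((Equiv.ofInjective w winj).symm).trans
        (Equiv.piCongrRight fun _ => finTwoEquiv.symm :
          (Fin (d-1) → Bool) ≃ (Fin (d-1) → Fin 2))), ?_⟩⟩
      intro a b
      obtain ⟨ε, hε⟩ := a.2
      obtain ⟨ε', hε'⟩ := b.2
      have ha2 : (Equiv.ofInjective w winj).symm a = ε := by
        apply winj
        rw [Equiv.apply_ofInjective_symm winj a, ← hε]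
      have hb2 : (Equiv.ofInjective w winj).symm b = ε' := by
        apply winj
        rw [Equiv.apply_ofInjective_symm winj b, ← hε']
      simp only [Equiv.trans_apply]
      rw [ha2, hb2]
      refine Iff.trans (hQadj ε ε') ?_
      simp only [SimpleGraph.comap_adj, Function.Embedding.coe_subtype]
      rw [show ((a : ∀ i : Fin (d-1), Fin (n (restrIdx d i)))) = w ε from hε.symm,
        show ((b : ∀ i : Fin (d-1), Fin (n (restrIdx d i)))) = w ε' from hε'.symm]
      exact (hGadj ε ε').symm
    rw [SimpleGraph.induce_eq_coe_induce_top] at key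
    exact key
  -- the ftil part sums to S
  have hsum1 : ∑ ε : Fin (d - 1) → Bool, ftil (w ε) = S := by
    have hmagic := hftil.2 G' hiso
    have hverts : G'.verts = Set.range w := rfl
    rw [hverts, finsum_mem_range winj, finsum_eq_sum_of_fintype] at hmagic
    exact hmagic
  -- the layer values
  have hlastval : ∀ ε, ((v ε (lastIdx d (by omega)) : ℕ) : ℤ) = (i : ℤ) - 1 := by
    intro ε
    have := hvd ε
    omega
  have hstep : ∀ ε, f (v ε) = ftil (w ε) +
      (if Even ((∑ j, x j) + ∑ j, (if ε j then 1 else 0)) then ((i : ℤ) - 1) * N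
        else ((n (lastIdx d (by omega : 1 ≤ d)) : ℤ) - i) * N) := by
    intro ε
    rw [hf (v ε)]
    have hcond : (∑ j : Fin (d - 1), ((v ε (restrIdx d j) : ℕ) + 1))
        = (∑ j, x j) + ∑ j, (if ε j then 1 else 0) := by
      rw [← Finset.sum_add_distrib]
      exact Finset.sum_congr rfl fun j _ => hv ε j
    rw [hcond]
    have hA : ((v ε (lastIdx d (by omega : 1 ≤ d)) : ℕ) : ℤ) * N = ((i : ℤ) - 1) * N := by
      rw [hlastval ε]
    have hB : ((n (lastIdx d (by omega : 1 ≤ d)) : ℤ) - (((v ε (lastIdx d (by omega : 1 ≤ d)) : ℕ) : ℤ) + 1)) * N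
        = ((n (lastIdx d (by omega : 1 ≤ d)) : ℤ) - i) * N := by
      rw [hlastval ε, sub_add_cancel]
    rw [hA, hB]
  -- put things together
  calc ∑ ε : Fin (d - 1) → Bool, f (v ε)
      = ∑ ε : Fin (d - 1) → Bool, (ftil (w ε) +
          (if Even ((∑ j, x j) + ∑ j, (if ε j then 1 else 0)) then ((i : ℤ) - 1) * N
            else ((n (lastIdx d (by omega : 1 ≤ d)) : ℤ) - i) * N)) :=
        Finset.sum_congr rfl fun ε _ => hstep ε
    _ = S + 2 ^ (d - 1 - 1) * ((((i : ℤ) - 1) * N) + ((n (lastIdx d (by omega : 1 ≤ d)) : ℤ) - i) * N) := by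
        rw [Finset.sum_add_distrib, hsum1, parity_sum (d - 1) (by omega)]
    _ = S + 2 ^ (d - 2) * ((n (lastIdx d (by omega : 1 ≤ d)) : ℤ) - 1) * N := by
        have h12 : d - 1 - 1 = d - 2 := by omega
        rw [h12]
        ring
end

section
/- Let d ≥ 3 and n_1,...,n_d ≥ 2 be integers and let M be the number of edges of Grid(n_1,...,n_{d-1}). Let g̃ be a Q_{d-1}-magic edge labeling of Grid(n_1,...,n_{d-1}) with magic sum S'. Define g on edges e = {x,y} of Grid(n_1,...,n_d) with y_i = x_i+1 for some i ≤ d-1 (all other coordinates equal), writing ẽ = {(x_1,...,x_{d-1}),(y_1,...,y_{d-1})}: if d is odd, g(e) = g̃(ẽ) + (x_d-1)M if i is odd and g(e) = g̃(ẽ) + (n_d-x_d)M if i is even; if d is even, then for i ≤ d-2, g(e) = g̃(ẽ) + (x_d-1)M if i is odd and g(e) = g̃(ẽ) + (n_d-x_d)M if i is even, and for i = d-1, g(e) = g̃(ẽ) + (x_d-1)M if x_1+⋯+x_{d-2} is odd and g(e) = g̃(ẽ) + (n_d-x_d)M if x_1+⋯+x_{d-2} is even. Then for every (x_1,...,x_d)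 ∈ [n_1-1]×⋯×[n_d-1] and every ε ∈ {0,1}: the sum of g(e) over the (d-1)2^{d-2} edges of the subcube {(x_1+ε_1,...,x_d+ε_d) : ε ∈ {0,1}^d} of Grid(n_1,...,n_d) both of whose endpoints have last coordinate x_d + ε equals S' + (d-1)2^{d-3}(n_d-1)M. -/
/-!
Restricted to the first `d-1` coordinates, the edges of the layer form a copy of `Q_{d-1}` in
`Grid(n_1,…,n_{d-1})`, so the `g̃`-parts of their labels add up to `S'`. All vertices of the layer
share the last coordinate, so each edge moreover carries either `A = (x_d+ε-1)M` or
`B = (n_d-x_d-ε)M`, and `A + B = (n_d-1)M`. Each direction has `2^{d-2}` edges; consecutive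
directions alternate between `A` and `B`, and when `d` is even the direction `d-1` splits evenly
too, because flipping the first coordinate changes the parity of `x_1+⋯+x_{d-2}`. So the offsets
total `(d-1)2^{d-3}(A+B)`.
-/

open Finset hiding restrict
open Function SimpleGraph

section Hypercube

variable {m : ℕ}

def cubeEquiv (m : ℕ) : (Fin m → Bool) ≃ (Fin m → Fin 2) :=
  Equiv.piCongrRight fun _ => finTwoEquiv.symm

theorem gridGraph_two_adj_cubeEquiv {η μ : Fin m → Bool} :
    (gridGraph fun _ : Fin m => 2).Adj (cubeEquiv m η) (cubeEquiv m μ) ↔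
      ∃ i, μ = update η i (!η i) := by
  have hcoord : ∀ a b : Bool, ((finTwoEquiv.symm a : ℕ) + 1 = finTwoEquiv.symm b ∨
      (finTwoEquiv.symm b : ℕ) + 1 = finTwoEquiv.symm a) ↔ (!a) = b := by decide
  simp only [gridGraph, cubeEquiv, Equiv.piCongrRight_apply, Pi.map_apply, hcoord,
    finTwoEquiv.symm.injective.eq_iff, eq_comm (a := μ), update_eq_iff]

theorem edgeSet_gridGraph_two :
    (gridGraph fun _ : Fin m => 2).edgeSet =
      (fun p : Fin m × (Fin m → Bool) => s(cubeEquiv m p.2, cubeEquiv m (update p.2 p.1 true))) ''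
        {p | p.2 p.1 = false} := by
  ext e
  induction e using Sym2.inductionOn with
  | hf a b =>
    obtain ⟨η, rfl⟩ := (cubeEquiv m).surjective a
    obtain ⟨μ, rfl⟩ := (cubeEquiv m).surjective b
    simp only [mem_edgeSet, gridGraph_two_adj_cubeEquiv, Set.mem_image, Set.mem_ofPred_eq,
      Prod.exists, Sym2.eq_iff, (cubeEquiv m).injective.eq_iff]
    constructor
    · rintro ⟨i, rfl⟩
      cases hi : η i
      · exact ⟨i, η, hi, Or.inl ⟨rfl, rfl⟩⟩
      · refine ⟨i, update η i false, update_self .., Or.inr ⟨rfl, ?_⟩⟩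
        simp [update_idem, ← hi]
    · rintro ⟨i, η', hi, ⟨rfl, rfl⟩ | ⟨rfl, rfl⟩⟩
      · exact ⟨i, by rw [hi]; rfl⟩
      · exact ⟨i, by simp [update_idem, ← hi]⟩

theorem injOn_sym2_cubeEquiv_update :
    Set.InjOn (fun p : Fin m × (Fin m → Bool) =>
      s(cubeEquiv m p.2, cubeEquiv m (update p.2 p.1 true))) {p | p.2 p.1 = false} := by
  rintro ⟨i, η⟩ (hi : η i = false) ⟨j, μ⟩ (hj : μ j = false) h
  simp only [Sym2.eq_iff, (cubeEquiv m).injective.eq_iff] at h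
  rcases h with ⟨rfl, h⟩ | ⟨rfl, h⟩
  · obtain rfl : i = j := by
      by_contra hij
      simpa [update_of_ne hij, hi] using congrFun h i
    rfl
  · have hμi : μ i = true := by simpa using (congrFun h i).symm
    rcases eq_or_ne i j with rfl | hij
    · simp [hμi] at hj
    · simp [update_of_ne hij, hμi] at hi

theorem finsum_edgeSet_gridGraph_two {M : Type*} [AddCommMonoid M]
    (F : Sym2 (Fin m → Fin 2) → M) :
    ∑ᶠ e ∈ (gridGraph fun _ : Fin m => 2).edgeSet, F e =
      ∑ i, ∑ η with η i = false, F s(cubeEquiv m η, cubeEquiv m (update η i true)) := by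
  rw [edgeSet_gridGraph_two, finsum_mem_image injOn_sym2_cubeEquiv_update, ← coe_filter_univ,
    finsum_mem_coe_finset, sum_filter, Fintype.sum_prod_type]
  simp only [sum_filter]

variable {V : Type*} {G : SimpleGraph V} {w : (Fin m → Bool) → V}

def cubeCopy (hw : Injective w)
    (hadj : ∀ η i, η i = false → G.Adj (w η) (w (update η i true))) :
    Copy (gridGraph fun _ : Fin m => 2) G where
  toHom.toFun := w ∘ (cubeEquiv m).symm
  toHom.map_rel' {a b} h := by
    obtain ⟨η, rfl⟩ := (cubeEquiv m).surjective a
    obtain ⟨μ, rfl⟩ := (cubeEquiv m).surjective b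
    obtain ⟨i, rfl⟩ := gridGraph_two_adj_cubeEquiv.mp h
    simp only [comp_apply, Equiv.symm_apply_apply]
    cases hi : η i
    · exact hadj η i hi
    · rw [Bool.not_true]
      simpa [update_idem, ← hi] using (hadj (update η i false) i (update_self ..)).symm
  injective' := hw.comp (cubeEquiv m).symm.injective

theorem sum_cube_edges_eq_of_forall_finsum_eq {M : Type*} [AddCommMonoid M] {g : Sym2 V → M}
    {c : M} (hg : ∀ G' : G.Subgraph, Nonempty (G'.coe ≃g gridGraph fun _ : Fin m => 2) →
      ∑ᶠ e ∈ G'.edgeSet, g e = c)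
    (hw : Injective w) (hadj : ∀ η i, η i = false → G.Adj (w η) (w (update η i true))) :
    ∑ i, ∑ η with η i = false, g s(w η, w (update η i true)) = c := by
  let f := cubeCopy hw hadj
  rw [← hg f.toSubgraph ⟨f.isoToSubgraph.symm⟩, Subgraph.edgeSet_map, Subgraph.edgeSet_top,
    finsum_mem_image (Sym2.map.injective f.injective).injOn, finsum_edgeSet_gridGraph_two]
  simp [f, cubeCopy]

end Hypercube

theorem Finset.card_filter_eq_card_filter_not_of_involution {α : Type*} (s : Finset α)
    (p : α → Prop) [DecidablePred p] (σ : α → α) (hσs : ∀ a ∈ s, σ a ∈ s)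
    (hσσ : ∀ a ∈ s, σ (σ a) = a) (hp : ∀ a ∈ s, p (σ a) ↔ ¬ p a) :
    #{a ∈ s | p a} = #{a ∈ s | ¬ p a} :=
  card_nbij' σ σ
    (fun a ha => by
      rw [mem_coe, mem_filter] at ha ⊢
      exact ⟨hσs a ha.1, fun h => (hp a ha.1).1 h ha.2⟩)
    (fun a ha => by
      rw [mem_coe, mem_filter] at ha ⊢
      exact ⟨hσs a ha.1, (hp a ha.1).2 ha.2⟩)
    (fun a ha => hσσ a (mem_filter.mp ha).1) (fun a ha => hσσ a (mem_filter.mp ha).1)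

theorem card_filter_apply_eq_false {m : ℕ} (i : Fin m) :
    #{η : Fin m → Bool | η i = false} = 2 ^ (m - 1) := by
  have h := Fintype.card_filter_piFinset_const_eq_of_mem (univ : Finset Bool) i (mem_univ false)
  rwa [Fintype.piFinset_univ, card_univ, Fintype.card_bool, Fintype.card_fin] at h

theorem sum_range_two_mul_ite_odd_succ {M : Type*} [AddCommMonoid M] (A B : M) (k : ℕ) :
    ∑ i ∈ range (2 * k), (if Odd (i + 1) then A else B) = k • (A + B) := by
  induction k with
  | zero => simp
  | succ k ih =>
    rw [mul_add_one, sum_range_succ, sum_range_succ, ih, if_pos (odd_two_mul_add_one k),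
      if_neg (Nat.not_odd_iff_even.mpr ⟨k + 1, by ring⟩), succ_nsmul, add_assoc]

theorem odd_sum_iff_not_odd_of_succ {ι : Type*} [Fintype ι] [DecidableEq ι] {f g : ι → ℕ} {z : ι}
    (hz : f z + 1 = g z) (h : ∀ j ≠ z, f j = g j) :
    Odd (∑ j, g j) ↔ ¬ Odd (∑ j, f j) := by
  have hsum : ∑ j, g j = ∑ j, f j + 1 := by
    rw [← add_sum_erase _ _ (mem_univ z), ← add_sum_erase _ _ (mem_univ z), ← hz,
      sum_congr rfl fun j hj => (h j (ne_of_mem_erase hj)).symm]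
    ring
  rw [hsum, Nat.odd_add_one]

theorem sum_range_layer_weights {R : Type*} [CommRing R] (d : ℕ) (hd : 3 ≤ d) (A B : R) :
    ∑ k ∈ range (d - 1),
        (if Odd d ∨ k + 1 ≤ d - 2 then 2 * (if Odd (k + 1) then A else B) else A + B) =
      ((d : R) - 1) * (A + B) := by
  rcases Nat.even_or_odd d with hev | hodd
  · obtain ⟨k, hk⟩ : ∃ k, d = 2 * k + 2 := by
      obtain ⟨j, hj⟩ := hev
      exact ⟨j - 1, by omega⟩
    have hlast : ¬ (Odd d ∨ 2 * k + 1 ≤ d - 2) := by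
      rw [not_or, Nat.not_odd_iff_even]
      exact ⟨hev, by omega⟩
    rw [show d - 1 = 2 * k + 1 by omega, sum_range_succ, if_neg hlast,
      sum_congr rfl fun i hi => if_pos (Or.inr (by rw [mem_range] at hi; omega)), ← mul_sum,
      sum_range_two_mul_ite_odd_succ, hk, nsmul_eq_mul]
    push_cast
    ring
  · obtain ⟨k, hk⟩ := id hodd
    rw [sum_congr rfl fun i _ => if_pos (Or.inl hodd), ← mul_sum, show d - 1 = 2 * k by omega,
      sum_range_two_mul_ite_odd_succ, hk, nsmul_eq_mul]
    push_cast
    ring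

theorem sum_layer_offsets {R : Type*} [CommRing R] (d : ℕ) (hd : 3 ≤ d) (A B : R)
    (P : (Fin (d - 1) → Bool) → Prop) [DecidablePred P] (z : Fin (d - 1)) (hz : (z : ℕ) < d - 2)
    (hP : ∀ η, P (update η z (!η z)) ↔ ¬ P η) :
    ∑ i : Fin (d - 1), ∑ η with η i = false,
        (if Odd d ∨ (i : ℕ) + 1 ≤ d - 2 then (if Odd ((i : ℕ) + 1) then A else B)
          else (if P η then A else B)) =
      ((d : R) - 1) * 2 ^ (d - 3) * (A + B) := by
  have hcard (i : Fin (d - 1)) : #{η : Fin (d - 1) → Bool | η i = false} = 2 * 2 ^ (d - 3) := by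
    rw [card_filter_apply_eq_false, ← pow_succ']
    congr 1
    omega
  have hinner (i : Fin (d - 1)) : ∑ η with η i = false,
      (if Odd d ∨ (i : ℕ) + 1 ≤ d - 2 then (if Odd ((i : ℕ) + 1) then A else B)
        else (if P η then A else B)) =
      2 ^ (d - 3) * (if Odd d ∨ (i : ℕ) + 1 ≤ d - 2 then 2 * (if Odd ((i : ℕ) + 1) then A else B)
        else A + B) := by
    by_cases hi : Odd d ∨ (i : ℕ) + 1 ≤ d - 2
    · simp only [if_pos hi, sum_const, hcard, nsmul_eq_mul]
      push_cast
      ring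
    · have hzi : z ≠ i := Fin.ne_of_val_ne fun h => hi (Or.inr (by omega))
      have hhalf := card_filter_eq_card_filter_not_of_involution {η | η i = false} P
        (fun η => update η z (!η z)) (by simp [update_of_ne hzi.symm]) (by simp [update_idem])
        (fun η _ => hP η)
      have hP_card : #{η ∈ {η | η i = false} | P η} = 2 ^ (d - 3) := by
        have h := card_filter_add_card_filter_not (s := {η : Fin (d - 1) → Bool | η i = false})
          fun η => P η
        rw [← hhalf, hcard i] at h
        omega
      simp only [hi, if_false]
      rw [sum_ite, sum_const, sum_const, ← hhalf, ← smul_add, hP_card, nsmul_eq_mul]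
      push_cast
      ring
  rw [sum_congr rfl fun i _ => hinner i, ← mul_sum,
    Fin.sum_univ_eq_sum_range (fun k => if Odd d ∨ k + 1 ≤ d - 2 then
      2 * (if Odd (k + 1) then A else B) else A + B), sum_range_layer_weights d hd]
  ring

theorem restrIdx_injective (d : ℕ) : Injective (restrIdx d) :=
  Fin.castLE_injective _

theorem eq_restrIdx_or_eq_lastIdx {d : ℕ} (hd : 1 ≤ d) (j : Fin d) :
    (∃ i, j = restrIdx d i) ∨ j = lastIdx d hd := by
  rcases lt_or_eq_of_le (Nat.le_sub_one_of_lt j.isLt) with h | h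
  · exact Or.inl ⟨⟨j, h⟩, rfl⟩
  · exact Or.inr (Fin.ext h)

theorem gridGraph_adj_restrict {d : ℕ} {n : Fin d → ℕ} {x y : ∀ j, Fin (n j)} {i : Fin (d - 1)}
    (hi : (x (restrIdx d i) : ℕ) + 1 = y (restrIdx d i))
    (hne : ∀ j ≠ restrIdx d i, x j = y j) :
    (gridGraph fun j : Fin (d - 1) => n (restrIdx d j)).Adj (restrict x) (restrict y) :=
  ⟨i, Or.inl hi, fun j hj => hne (restrIdx d j) ((restrIdx_injective d).ne hj)⟩

/-- `v η` is the vertex `x + η` of the subcube at `x`, in the `Fin`-coordinates of `gridGraph`,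
which are the paper's coordinates minus one. -/
def IsCubeAt {d : ℕ} {n : Fin d → ℕ} (x : Fin d → ℕ)
    (v : (Fin (d - 1) → Bool) → ∀ j, Fin (n j)) : Prop :=
  ∀ η j, (v η (restrIdx d j) : ℕ) + 1 = x (restrIdx d j) + if η j then 1 else 0

namespace IsCubeAt

variable {d : ℕ} {n : Fin d → ℕ} {x : Fin d → ℕ} {v : (Fin (d - 1) → Bool) → ∀ j, Fin (n j)}

theorem val_update (hv : IsCubeAt x v) {η : Fin (d - 1) → Bool} {i : Fin (d - 1)}
    (hi : η i = false) (j : Fin (d - 1)) :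
    (v (update η i true) (restrIdx d j) : ℕ) = v η (restrIdx d j) + if j = i then 1 else 0 := by
  have h₁ := hv η j
  have h₂ := hv (update η i true) j
  rcases eq_or_ne j i with rfl | hj
  · simp only [update_self, hi, if_true, Bool.false_eq_true, if_false] at h₂ h₁ ⊢
    omega
  · simp only [update_of_ne hj, hj, if_false] at h₂ ⊢
    omega

theorem injective_restrict (hv : IsCubeAt x v) : Injective fun η => restrict (v η) := by
  intro η μ h
  funext j
  have hj : (v η (restrIdx d j) : ℕ) = v μ (restrIdx d j) := congrArg (fun y => (y j : ℕ)) h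
  have h₁ := hv η j
  have h₂ := hv μ j
  have : (if η j then 1 else 0 : ℕ) = if μ j then 1 else 0 := by omega
  cases hη : η j <;> cases hμ : μ j <;> simp [hη, hμ] at this ⊢

theorem val_succ_and_eq_update (hv : IsCubeAt x v) (hd : 1 ≤ d)
    (hlast : ∀ η μ, v η (lastIdx d hd) = v μ (lastIdx d hd)) {η : Fin (d - 1) → Bool}
    {i : Fin (d - 1)} (hi : η i = false) :
    (v η (restrIdx d i) : ℕ) + 1 = v (update η i true) (restrIdx d i) ∧
      ∀ j ≠ restrIdx d i, v η j = v (update η i true) j := by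
  refine ⟨by rw [hv.val_update hi, if_pos rfl], fun j hj => ?_⟩
  rcases eq_restrIdx_or_eq_lastIdx hd j with ⟨k, rfl⟩ | rfl
  · have hk : k ≠ i := fun h => hj (h ▸ rfl)
    exact Fin.ext (by rw [hv.val_update hi, if_neg hk, add_zero])
  · exact hlast _ _

theorem odd_sum_update_iff (hv : IsCubeAt x v) {z : Fin (d - 1)} (hz : (z : ℕ) < d - 2)
    (η : Fin (d - 1) → Bool) :
    Odd (∑ j : Fin (d - 2), ((v (update η z (!η z)) (Fin.castLE (Nat.sub_le d 2) j) : ℕ) + 1)) ↔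
      ¬ Odd (∑ j : Fin (d - 2), ((v η (Fin.castLE (Nat.sub_le d 2) j) : ℕ) + 1)) := by
  have key (μ : Fin (d - 1) → Bool) (hμ : μ z = false) :
      Odd (∑ j : Fin (d - 2), ((v (update μ z true) (Fin.castLE (Nat.sub_le d 2) j) : ℕ) + 1)) ↔
        ¬ Odd (∑ j : Fin (d - 2), ((v μ (Fin.castLE (Nat.sub_le d 2) j) : ℕ) + 1)) := by
    refine odd_sum_iff_not_odd_of_succ (z := ⟨z, hz⟩) ?_ fun j hj => ?_
    · change (v μ (restrIdx d z) : ℕ) + 1 + 1 = v (update μ z true) (restrIdx d z) + 1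
      rw [hv.val_update hμ, if_pos rfl]
    · have hle : d - 2 ≤ d - 1 := by omega
      have hjz : Fin.castLE hle j ≠ z := fun h => hj (Fin.ext (by simp [← h]))
      change (v μ (restrIdx d (Fin.castLE hle j)) : ℕ) + 1 =
        v (update μ z true) (restrIdx d (Fin.castLE hle j)) + 1
      rw [hv.val_update hμ, if_neg hjz, add_zero]
  cases hη : η z
  · exact key η hη
  · have h := key (update η z false) (update_self ..)
    rw [update_idem, ← hη, update_eq_self] at h
    rw [Bool.not_true]
    tauto

end IsCubeAt

/-- with `g` defined on the edges of `Grid(n 0, …, n (d-1))` in the first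
`d-1` directions via a `Q_{d-1}`-magic edge labeling `g̃` (magic sum `S'`) plus `(x_d-1)M`
or `(n_d-x_d)M` according to the parity of the direction `i` (when `d` is odd, or `d` even
and `i ≤ d-2`) or of `x₁+⋯+x_{d-2}` (when `d` is even and `i = d-1`), for every
`(x₁,…,x_d) ∈ [n₁-1] × ⋯ × [n_d-1]` and every `ε ∈ {0,1}`, the labels of the
`(d-1)·2^{d-2}` edges of the subcube `{x+η : η ∈ {0,1}^d}` both of whose endpoints have
last coordinate `x_d + ε` sum to `S' + (d-1)·2^{d-3}(n_d-1)M`. -/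
theorem induction_step_layer_edges_sum (d : ℕ) (hd : 3 ≤ d) (n : Fin d → ℕ)
    (M : ℕ)
    (gtil : Sym2 (∀ i : Fin (d - 1), Fin (n (restrIdx d i))) → ℤ) (S' : ℤ)
    (hgtil : IsMagicEdgeLabeling (gridGraph fun i : Fin (d - 1) => n (restrIdx d i))
      (gridGraph fun _ : Fin (d - 1) => (2 : ℕ)) gtil S')
    (g : Sym2 (∀ i, Fin (n i)) → ℤ)
    (hghor : ∀ (x y : ∀ i, Fin (n i)) (i : Fin (d - 1)),
      (x (restrIdx d i) : ℕ) + 1 = (y (restrIdx d i) : ℕ) →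
      (∀ j, j ≠ restrIdx d i → x j = y j) →
      g s(x, y) = gtil s(restrict x, restrict y) +
        (if Odd d ∨ (i : ℕ) + 1 ≤ d - 2 then
          (if Odd ((i : ℕ) + 1) then ((x (lastIdx d (by omega)) : ℕ) : ℤ) * M
          else
            ((n (lastIdx d (by omega)) : ℤ) -
              (((x (lastIdx d (by omega)) : ℕ) : ℤ) + 1)) * M)
        else
          (if Odd (∑ j : Fin (d - 2), ((x (Fin.castLE (Nat.sub_le d 2) j) : ℕ) + 1)) then
            ((x (lastIdx d (by omega)) : ℕ) : ℤ) * M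
          else
            ((n (lastIdx d (by omega)) : ℤ) -
              (((x (lastIdx d (by omega)) : ℕ) : ℤ) + 1)) * M)))
    (x : Fin d → ℕ) (ε : ℕ)
    (v : (Fin (d - 1) → Bool) → ∀ j, Fin (n j))
    (hv : ∀ η j, ((v η) (restrIdx d j) : ℕ) + 1 = x (restrIdx d j) + (if η j then 1 else 0))
    (hvd : ∀ η, ((v η) (lastIdx d (by omega)) : ℕ) + 1 = x (lastIdx d (by omega)) + ε) :
    ∑ i : Fin (d - 1),
        ∑ η ∈ Finset.univ.filter (fun η : Fin (d - 1) → Bool => η i = false),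
          g s(v η, v (Function.update η i true))
      = S' + ((d : ℤ) - 1) * 2 ^ (d - 3) * ((n (lastIdx d (by omega)) : ℤ) - 1) * M := by
  have hd1 : 1 ≤ d := by omega
  replace hv : IsCubeAt x v := hv
  obtain ⟨c, hc⟩ : ∃ c : ℕ, ∀ η, (v η (lastIdx d hd1) : ℕ) = c :=
    ⟨x (lastIdx d hd1) + ε - 1, fun η => by
      have : (v η (lastIdx d hd1) : ℕ) + 1 = x (lastIdx d hd1) + ε := hvd η
      omega⟩
  have hstep (η : Fin (d - 1) → Bool) (i : Fin (d - 1)) (hi : η i = false) :=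
    hv.val_succ_and_eq_update hd1 (fun η μ => Fin.ext ((hc η).trans (hc μ).symm)) hi
  rw [sum_congr rfl fun i _ => sum_congr rfl fun η hη =>
      hghor _ _ i (hstep η i (mem_filter.mp hη).2).1 (hstep η i (mem_filter.mp hη).2).2]
  have hz : ((⟨0, by omega⟩ : Fin (d - 1)) : ℕ) < d - 2 := by
    show 0 < d - 2
    omega
  simp only [hc]
  rw [sum_congr rfl fun i _ => sum_add_distrib, sum_add_distrib,
    sum_cube_edges_eq_of_forall_finsum_eq hgtil.2 hv.injective_restrict
      fun η i hi => gridGraph_adj_restrict (hstep η i hi).1 (hstep η i hi).2,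
    sum_layer_offsets d hd _ _ _ _ hz (hv.odd_sum_update_iff hz)]
  ring
end
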